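/- arXiv:1304.7750 — 6 statements merged into one kernel-verified Lean document; each statement's English description precedes it below -/
import Mathlib

section
/- Let (a,b,c) be a triple of positive real numbers with a < b < c. Then D_{a,b,c} = ∅ if and only if Q_{a,b,c} < +∞. -/
open MeasureTheory Set

/- Indicator function of the interval `[0, c)`. -/
open Classical in
noncomputable def chiIco (c x : ℝ) : ℝ := if 0 ≤ x ∧ x < c then 1 else 0

/-- The row `μ = j·a` of the infinite matrix `M_{a,b,c}(t)` applied to the vector
`z : bℤ → ℝ` (indexed by `k : ℤ`, with `λ = k·b`):
`(M_{a,b,c}(t)z)(μ) = Σ_{λ∈bℤ} χ_{[0,c)}(t − μ + λ)·z(λ)`. -/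
noncomputable def Mrow (a b c t : ℝ) (z : ℤ → ℝ) (j : ℤ) : ℝ :=
  ∑' k : ℤ, chiIco c (t - (j : ℝ) * a + (k : ℝ) * b) * z k

/-- `D_{a,b,c} = {t : M_{a,b,c}(t)x = 2 for some binary x with x(0) = 1}`. -/
def Dset (a b c : ℝ) : Set ℝ :=
  {t : ℝ | ∃ x : ℤ → ℝ, (∀ k, x k = 0 ∨ x k = 1) ∧ x 0 = 1 ∧ ∀ j : ℤ, Mrow a b c t x j = 2}

/-- `S_{a,b,c} = {t : M_{a,b,c}(t)x = 1 for some binary x with x(0) = 1}`. -/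
def Sset (a b c : ℝ) : Set ℝ :=
  {t : ℝ | ∃ x : ℤ → ℝ, (∀ k, x k = 0 ∨ x k = 1) ∧ x 0 = 1 ∧ ∀ j : ℤ, Mrow a b c t x j = 1}

/-- `Q_{a,b,c} = sup_{t∈ℝ} sup_{x∈B_b} Q_{a,b,c}(t,x) ∈ [0,∞]`, where `Q_{a,b,c}(t,x)`
is the maximal length `n` of a run of consecutive twos `(M_{a,b,c}(t)x)(μ) = 2`,
`μ ∈ {ja, (j+1)a, …, (j+n−1)a}` (and `0` if there are no twos). -/
noncomputable def Qabc (a b c : ℝ) : ℕ∞ :=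
  ⨆ (t : ℝ) (x : ℤ → ℝ) (_ : ∀ k, x k = 0 ∨ x k = 1) (n : ℕ)
    (_ : 1 ≤ n ∧ ∃ j : ℤ, ∀ i : ℕ, i < n → Mrow a b c t x (j + (i : ℤ)) = 2), (n : ℕ∞)

/-!
If `M(t)x = 2` for some `x`, runs of twos are unbounded. Conversely, translating `t` by
multiples of `a` and `b` turns runs of length `2N + 1` into `t_N ∈ [0, c)` and binary `x_N` with
`x_N(0) = 1` and twos in all rows `|j| ≤ N`. Along an ultrafilter, `t_N → t` and `x_N → x`
coordinatewise. Each row involves only finitely many columns, uniformly for `t ∈ [0, c]`, and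
`χ_{[0,c)}` is right-continuous, so if eventually `t ≤ t_N` then `M(t)x = 2`. If eventually
`t_N < t`, the limit rows are those of `χ_{(0,c]}`, and the reflection `t ↦ c - t`, `x ↦ x(-·)`
turns them back into rows of `χ_{[0,c)}`, so `M(c - t)x(-·) = 2`.
-/

open Filter Topology

section chiIco

variable {c u : ℝ}

lemma chiIco_of_mem (h : u ∈ Ico 0 c) : chiIco c u = 1 := if_pos h

lemma chiIco_of_notMem (h : u ∉ Ico 0 c) : chiIco c u = 0 := if_neg h

lemma mem_Ico_of_chiIco_ne_zero (h : chiIco c u ≠ 0) : u ∈ Ico 0 c :=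
  not_not.1 fun hu => h (chiIco_of_notMem hu)

lemma chiIco_eventually_eq_nhdsGE (c s : ℝ) : ∀ᶠ v in 𝓝[≥] s, chiIco c v = chiIco c s := by
  by_cases hs : s ∈ Ico 0 c
  · filter_upwards [Ico_mem_nhdsGE hs.2] with v hv
    rw [chiIco_of_mem hs, chiIco_of_mem ⟨hs.1.trans hv.1, hv.2⟩]
  · have hout : ∀ᶠ v in 𝓝[≥] s, v ∉ Ico 0 c := by
      rcases not_and_or.1 hs with hs | hs
      · filter_upwards [nhdsWithin_le_nhds (Iio_mem_nhds (not_le.1 hs))] with v hv h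
        exact not_le.2 hv h.1
      · filter_upwards [self_mem_nhdsWithin] with v hv h
        exact hs (h.2.trans_le' hv)
    filter_upwards [hout] with v hv
    rw [chiIco_of_notMem hs, chiIco_of_notMem hv]

/-- From the left, `χ_{[0,c)}` tends to `χ_{(0,c]}(s) = χ_{[0,c)}(c - s)`. -/
lemma chiIco_eventually_eq_nhdsLT (c s : ℝ) :
    ∀ᶠ v in 𝓝[<] s, chiIco c v = chiIco c (c - s) := by
  by_cases hs : s ∈ Ioc 0 c
  · filter_upwards [Ioo_mem_nhdsLT hs.1] with v hv
    rw [chiIco_of_mem ⟨hv.1.le, hv.2.trans_le hs.2⟩,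
      chiIco_of_mem ⟨sub_nonneg.2 hs.2, sub_lt_self c hs.1⟩]
  · have hout : c - s ∉ Ico 0 c ∧ ∀ᶠ v in 𝓝[<] s, v ∉ Ico 0 c := by
      rcases not_and_or.1 hs with hs | hs
      · refine ⟨fun h => h.2.not_ge (by linarith [not_lt.1 hs]), ?_⟩
        filter_upwards [self_mem_nhdsWithin] with v hv h
        exact hs (h.1.trans_lt hv)
      · refine ⟨fun h => h.1.not_gt (by linarith [not_le.1 hs]), ?_⟩
        filter_upwards [nhdsWithin_le_nhds (Ioi_mem_nhds (not_le.1 hs))] with v hv h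
        exact h.2.not_ge hv.le
    filter_upwards [hout.2] with v hv
    rw [chiIco_of_notMem hout.1, chiIco_of_notMem hv]

end chiIco

section Mrow

variable {a b c : ℝ}

/-- The columns `k` that can meet row `j` of `M_{a,b,c}(t)` when `t ∈ [0, c]`. -/
noncomputable def rowColumns (a b c : ℝ) (j : ℤ) : Finset ℤ :=
  Finset.Icc ⌈(j * a - c) / b⌉ ⌊(j * a + c) / b⌋

lemma chiIco_eq_zero_of_notMem_rowColumns (hb : 0 < b) {t : ℝ} (ht : t ∈ Icc 0 c) {j k : ℤ}
    (hk : k ∉ rowColumns a b c j) : chiIco c (t - j * a + k * b) = 0 := by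
  by_contra h
  obtain ⟨h₁, h₂⟩ := mem_Ico_of_chiIco_ne_zero h
  refine hk (Finset.mem_Icc.2 ⟨Int.ceil_le.2 ?_, Int.le_floor.2 ?_⟩)
  · rw [div_le_iff₀ hb]; linarith [ht.2]
  · rw [le_div_iff₀ hb]; linarith [ht.1]

lemma Mrow_eq_sum_rowColumns (hb : 0 < b) {t : ℝ} (ht : t ∈ Icc 0 c) (x : ℤ → ℝ) (j : ℤ) :
    Mrow a b c t x j = ∑ k ∈ rowColumns a b c j, chiIco c (t - j * a + k * b) * x k :=
  tsum_eq_sum fun _ hk => by rw [chiIco_eq_zero_of_notMem_rowColumns hb ht hk, zero_mul]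

lemma Mrow_sub_intCast_mul (t : ℝ) (x : ℤ → ℝ) (m j : ℤ) :
    Mrow a b c (t - m * a) x j = Mrow a b c t x (j + m) :=
  tsum_congr fun k => by push_cast; ring_nf

lemma Mrow_add_intCast_mul (t : ℝ) (x : ℤ → ℝ) (m j : ℤ) :
    Mrow a b c (t + m * b) (fun k => x (k + m)) j = Mrow a b c t x j := by
  refine (tsum_congr fun k => ?_).trans
    ((Equiv.addRight m).tsum_eq fun k => chiIco c (t - j * a + k * b) * x k)
  simp only [Equiv.coe_addRight]; push_cast; ring_nf

lemma Mrow_const_sub_comp_neg (t : ℝ) (x : ℤ → ℝ) (j : ℤ) :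
    Mrow a b c (c - t) (fun k => x (-k)) j =
      ∑' k : ℤ, chiIco c (c - (t - (-j : ℤ) * a + k * b)) * x k := by
  rw [Mrow, ← (Equiv.neg ℤ).tsum_eq]
  exact tsum_congr fun k => by simp only [Equiv.neg_apply, neg_neg]; push_cast; ring_nf

lemma exists_chiIco_eq_one_of_Mrow_eq_two {t : ℝ} {x : ℤ → ℝ} (hx : ∀ k, x k = 0 ∨ x k = 1)
    {j : ℤ} (h : Mrow a b c t x j = 2) : ∃ k : ℤ, chiIco c (t - j * a + k * b) = 1 ∧ x k = 1 := by
  by_contra! hne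
  have hzero : Mrow a b c t x j = 0 := by
    refine (tsum_eq_sum (s := ∅) fun k _ => ?_).trans Finset.sum_empty
    rcases hx k with hk | hk
    · rw [hk, mul_zero]
    · by_cases hχ : chiIco c (t - j * a + k * b) = 0
      · rw [hχ, zero_mul]
      · exact absurd hk (hne k (chiIco_of_mem (mem_Ico_of_chiIco_ne_zero hχ)))
  norm_num [hzero] at h

end Mrow

section Runs

variable {a b c : ℝ}

lemma Qabc_eq_top_iff : Qabc a b c = ⊤ ↔ ∀ n : ℕ, ∃ (t : ℝ) (x : ℤ → ℝ),
    (∀ k, x k = 0 ∨ x k = 1) ∧ ∃ j : ℤ, ∀ i : ℕ, i < n → Mrow a b c t x (j + i) = 2 := by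
  constructor
  · intro h n
    have hn := ENat.eq_top_iff_forall_gt.1 h n
    simp only [Qabc, lt_iSup_iff] at hn
    obtain ⟨t, x, hx, m, ⟨-, j, hj⟩, hnm⟩ := hn
    exact ⟨t, x, hx, j, fun i hi => hj i (hi.trans (by exact_mod_cast hnm))⟩
  · refine fun h => ENat.eq_top_iff_forall_ge.2 fun n => ?_
    obtain ⟨t, x, hx, j, hj⟩ := h (n + 1)
    calc (n : ℕ∞) ≤ (n + 1 : ℕ) := by exact_mod_cast n.le_succ
      _ ≤ Qabc a b c := le_iSup₂_of_le t x <| le_iSup₂_of_le hx (n + 1) <|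
          le_iSup_of_le ⟨n.succ_pos, j, hj⟩ le_rfl

lemma exists_centered_twos
    (hrun : ∀ n : ℕ, ∃ (t : ℝ) (x : ℤ → ℝ),
      (∀ k, x k = 0 ∨ x k = 1) ∧ ∃ j : ℤ, ∀ i : ℕ, i < n → Mrow a b c t x (j + i) = 2)
    (N : ℕ) : ∃ t ∈ Ico 0 c, ∃ x : ℤ → ℝ, (∀ k, x k = 0 ∨ x k = 1) ∧ x 0 = 1 ∧
      ∀ j : ℤ, j.natAbs ≤ N → Mrow a b c t x j = 2 := by
  obtain ⟨t, x, hx, j₀, hj₀⟩ := hrun (2 * N + 1)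
  have hcentered : ∀ j : ℤ, j.natAbs ≤ N → Mrow a b c (t - (j₀ + N : ℤ) * a) x j = 2 := by
    intro j hj
    have := hj₀ (j + N).toNat (by omega)
    rwa [Int.toNat_of_nonneg (by omega), show j₀ + (j + N) = j + (j₀ + N) by ring,
      ← Mrow_sub_intCast_mul] at this
  obtain ⟨k, hk, hxk⟩ := exists_chiIco_eq_one_of_Mrow_eq_two hx (hcentered 0 (Nat.zero_le N))
  refine ⟨t - (j₀ + N : ℤ) * a + k * b, ?_, fun i => x (i + k), fun i => hx _,
    by simpa using hxk, fun j hj => ?_⟩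
  · simpa only [Int.cast_zero, zero_mul, sub_zero] using
      mem_Ico_of_chiIco_ne_zero (hk.trans_ne one_ne_zero)
  · rw [Mrow_add_intCast_mul]
    exact hcentered j hj

end Runs

section Limits

variable {ι : Type*} {l : Filter ι} [l.NeBot] {a b c t : ℝ} {T : ι → ℝ} {X : ι → ℤ → ℝ}
  {x : ℤ → ℝ}

/-- `g` is the one-sided limit of `χ_{[0,c)}` along `T`; convergence of the rows holds because
they are finite sums over the same `rowColumns`. -/
lemma eventually_Mrow_eq_tsum (hb : 0 < b) (hT : ∀ n, T n ∈ Icc 0 c)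
    (hX : ∀ k, ∀ᶠ n in l, X n k = x k) {g : ℝ → ℝ}
    (hg : ∀ s, ∀ᶠ n in l, chiIco c (T n + s) = g (t + s)) (j : ℤ) :
    ∀ᶠ n in l, Mrow a b c (T n) (X n) j = ∑' k : ℤ, g (t - j * a + k * b) * x k := by
  have hterm : ∀ k : ℤ, ∀ᶠ n in l,
      chiIco c (T n - j * a + k * b) * X n k = g (t - j * a + k * b) * x k := by
    intro k
    filter_upwards [hg (-(j * a) + k * b), hX k] with n hgn hXn
    rw [hXn, sub_eq_add_neg, add_assoc, hgn, ← add_assoc, ← sub_eq_add_neg]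
  have hsum : ∑' k : ℤ, g (t - j * a + k * b) * x k =
      ∑ k ∈ rowColumns a b c j, g (t - j * a + k * b) * x k := by
    refine tsum_eq_sum fun k hk => ?_
    obtain ⟨n, hn⟩ := (hterm k).exists
    rw [← hn, chiIco_eq_zero_of_notMem_rowColumns hb (hT n) hk, zero_mul]
  filter_upwards [(eventually_all_finset _).2 fun k _ => hterm k] with n hn
  rw [Mrow_eq_sum_rowColumns hb (hT n), hsum]
  exact Finset.sum_congr rfl hn

lemma Mrow_eq_two_of_tendsto_nhdsGE (hb : 0 < b) (hT : ∀ n, T n ∈ Icc 0 c)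
    (hX : ∀ k, ∀ᶠ n in l, X n k = x k) (hTt : Tendsto T l (𝓝[≥] t))
    (hrows : ∀ j, ∀ᶠ n in l, Mrow a b c (T n) (X n) j = 2) (j : ℤ) : Mrow a b c t x j = 2 := by
  have hχ : ∀ s, ∀ᶠ n in l, chiIco c (T n + s) = chiIco c (t + s) := fun s => by
    have hs : Tendsto (fun n => T n + s) l (𝓝[≥] (t + s)) :=
      tendsto_nhdsWithin_iff.2 ⟨(tendsto_nhdsWithin_iff.1 hTt).1.add_const s,
        (tendsto_nhdsWithin_iff.1 hTt).2.mono fun n (hn : t ≤ T n) => add_le_add_left hn s⟩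
    exact hs.eventually (chiIco_eventually_eq_nhdsGE c (t + s))
  obtain ⟨n, h₂, heq⟩ := ((hrows j).and (eventually_Mrow_eq_tsum (a := a) hb hT hX hχ j)).exists
  exact heq.symm.trans h₂

lemma Mrow_eq_two_of_tendsto_nhdsLT (hb : 0 < b) (hT : ∀ n, T n ∈ Icc 0 c)
    (hX : ∀ k, ∀ᶠ n in l, X n k = x k) (hTt : Tendsto T l (𝓝[<] t))
    (hrows : ∀ j, ∀ᶠ n in l, Mrow a b c (T n) (X n) j = 2) (j : ℤ) :
    Mrow a b c (c - t) (fun k => x (-k)) j = 2 := by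
  have hχ : ∀ s, ∀ᶠ n in l, chiIco c (T n + s) = chiIco c (c - (t + s)) := fun s => by
    have hs : Tendsto (fun n => T n + s) l (𝓝[<] (t + s)) :=
      tendsto_nhdsWithin_iff.2 ⟨(tendsto_nhdsWithin_iff.1 hTt).1.add_const s,
        (tendsto_nhdsWithin_iff.1 hTt).2.mono fun n (hn : T n < t) => add_lt_add_left hn s⟩
    exact hs.eventually (chiIco_eventually_eq_nhdsLT c (t + s))
  obtain ⟨n, h₂, heq⟩ :=
    ((hrows (-j)).and
      (eventually_Mrow_eq_tsum (a := a) (g := fun v => chiIco c (c - v)) hb hT hX hχ (-j))).exists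
  rw [Mrow_const_sub_comp_neg, ← heq, h₂]

end Limits

lemma Dset_nonempty_of_Qabc_eq_top {a b c : ℝ} (hb : 0 < b) (hQ : Qabc a b c = ⊤) :
    (Dset a b c).Nonempty := by
  choose T hT X hX hX0 hrows using exists_centered_twos (Qabc_eq_top_iff.1 hQ)
  let U := hyperfilter ℕ
  have hTIcc : ∀ n, T n ∈ Icc 0 c := fun n => Ico_subset_Icc_self (hT n)
  obtain ⟨t, -, hTt⟩ : ∃ t ∈ Icc 0 c, Tendsto T U (𝓝 t) :=
    isCompact_Icc.ultrafilter_le_nhds (U.map T) (le_principal_iff.2 (mem_map.2 (univ_mem' hTIcc)))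
  have hlim : ∀ k, ∃ v : ℝ, (v = 0 ∨ v = 1) ∧ ∀ᶠ n in (U : Filter ℕ), X n k = v := fun k =>
    (Ultrafilter.eventually_or.1 (univ_mem' fun n => hX n k)).elim
      (fun h => ⟨0, .inl rfl, h⟩) (fun h => ⟨1, .inr rfl, h⟩)
  choose x hx hXx using hlim
  have hx0 : x 0 = 1 := by
    obtain ⟨n, hn⟩ := (hXx 0).exists
    rw [← hn, hX0 n]
  have hrowsU : ∀ j : ℤ, ∀ᶠ n in (U : Filter ℕ), Mrow a b c (T n) (X n) j = 2 := fun j =>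
    ((eventually_ge_atTop j.natAbs).filter_mono
      (hyperfilter_le_cofinite.trans_eq Nat.cofinite_eq_atTop)).mono fun n hn => hrows n j hn
  rcases Ultrafilter.eventually_or.1 (univ_mem' fun n => le_or_gt t (T n)) with hge | hlt
  · exact ⟨t, x, hx, hx0, Mrow_eq_two_of_tendsto_nhdsGE hb hTIcc hXx
      (tendsto_nhdsWithin_iff.2 ⟨hTt, hge⟩) hrowsU⟩
  · exact ⟨c - t, fun k => x (-k), fun k => hx (-k), by simpa using hx0,
      Mrow_eq_two_of_tendsto_nhdsLT hb hTIcc hXx (tendsto_nhdsWithin_iff.2 ⟨hTt, hlt⟩) hrowsU⟩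

lemma Dset_nonempty_iff_Qabc_eq_top {a b c : ℝ} (hb : 0 < b) :
    (Dset a b c).Nonempty ↔ Qabc a b c = ⊤ := by
  refine ⟨fun ⟨t, x, hx, _, hrow⟩ => Qabc_eq_top_iff.2 fun _ => ⟨t, x, hx, 0, fun i _ => hrow _⟩,
    Dset_nonempty_of_Qabc_eq_top hb⟩

theorem D_empty_iff_Q_finite_general (a b c : ℝ) (ha : 0 < a) (hab : a < b) :
    Dset a b c = ∅ ↔ Qabc a b c < ⊤ := by
  rw [lt_top_iff_ne_top, ← Set.not_nonempty_iff_eq_empty]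
  exact (Dset_nonempty_iff_Qabc_eq_top (ha.trans hab)).not

/-- Lemma `dabc2toqabc`: `D_{a,b,c} = ∅` if and only if `Q_{a,b,c} < +∞`. -/
theorem D_empty_iff_Q_finite (a b c : ℝ) (ha : 0 < a) (hab : a < b) (hbc : b < c) :
    Dset a b c = ∅ ↔ Qabc a b c < ⊤ :=
  D_empty_iff_Q_finite_general a b c ha hab
end

section
/- Let (a,b,c) be a triple of positive real numbers with a < b < c, and suppose Q_{a,b,c} < +∞. Then for every t ∈ [0,b) and every complex vector z = (z(λ))_{λ∈bℤ}, one has Σ_{μ∈aℤ, 0 ≤ μ ≤ a·Q_{a,b,c}+2a+b+c} |(M_{a,b,c}(t)z)(μ)| ≥ (b/(2c))·|z(0)|. -/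
open MeasureTheory Set

/-- The row `μ = j·a` of `M_{a,b,c}(t)` applied to a complex vector. -/
noncomputable def MrowC (a b c t : ℝ) (z : ℤ → ℂ) (j : ℤ) : ℂ :=
  ∑' k : ℤ, ((chiIco c (t - (j : ℝ) * a + (k : ℝ) * b) : ℝ) : ℂ) * z k

/-! Row `j` of `M_{a,b,c}(t)` is supported on the columns `k ∈ [f j, g j)`, where
`f j = ⌈(ja - t)/b⌉` and `g j = ⌈(ja - t + c)/b⌉`; since `a ≤ b ≤ c`, both edges are
nondecreasing with unit steps and `f j < g j`. With the partial sums `S m = ∑_{0 ≤ k < m} z k`,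
row `j` of `M_{a,b,c}(t) z` is `S (g j) - S (f j)`, so `‖z 0‖ = ‖S 1 - S 0‖` is at most the sum
of the norms of the rows along any path from `0` to `1` in the graph with one edge `{f j, g j}`
per row.

Such a path through rows `0, …, Q` exists: follow each column of row `0` down the rows, moving
it to the column entering a row whenever it leaves that row. A chain that dies joins its column
to the next one, while two chains that survive `Q` rows mark a binary vector whose products with
rows `0, …, Q` all equal `2`, contradicting the definition of `Q`. -/

section RowGraph

variable {ι V : Type*}

def rowGraph (f g : ι → V) (J : Finset ι) : SimpleGraph V :=
  SimpleGraph.fromRel fun u v => ∃ j ∈ J, f j = u ∧ g j = v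

lemma rowGraph_adj {f g : ι → V} {J : Finset ι} {j : ι} (hj : j ∈ J) (hfg : f j ≠ g j) :
    (rowGraph f g J).Adj (f j) (g j) :=
  ⟨hfg, Or.inl ⟨j, hj, rfl, rfl⟩⟩

lemma edgeSet_rowGraph_subset (f g : ι → V) (J : Finset ι) :
    (rowGraph f g J).edgeSet ⊆ (fun j => s(f j, g j)) '' J := by
  intro e he
  induction e using Sym2.ind with
  | _ u v =>
    obtain ⟨-, ⟨j, hj, rfl, rfl⟩ | ⟨j, hj, rfl, rfl⟩⟩ := he
    · exact ⟨j, hj, rfl⟩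
    · exact ⟨j, hj, Sym2.eq_swap⟩

variable {E : Type*} [SeminormedAddCommGroup E]

def normSubOnEdge (S : V → E) : Sym2 V → ℝ :=
  Sym2.lift ⟨fun u v => ‖S u - S v‖, fun u v => norm_sub_rev (S u) (S v)⟩

lemma norm_sub_le_sum_edges {G : SimpleGraph V} (S : V → E) {u v : V} (w : G.Walk u v) :
    ‖S u - S v‖ ≤ (w.edges.map (normSubOnEdge S)).sum := by
  induction w with
  | nil => simp
  | cons _ _ ih =>
    simp only [SimpleGraph.Walk.edges_cons, List.map_cons, List.sum_cons, normSubOnEdge,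
      Sym2.lift_mk] at ih ⊢
    exact (norm_sub_le_norm_sub_add_norm_sub _ _ _).trans (add_le_add le_rfl ih)

/-- Along a path every row edge is used at most once. -/
lemma norm_sub_le_sum_of_reachable (S : V → E) {f g : ι → V} {J : Finset ι} {u v : V}
    (h : (rowGraph f g J).Reachable u v) :
    ‖S u - S v‖ ≤ ∑ j ∈ J, ‖S (f j) - S (g j)‖ := by
  classical
  obtain ⟨w⟩ := h
  have hsub : w.bypass.edges.toFinset ⊆ J.image fun j => s(f j, g j) := fun e he => by
    obtain ⟨j, hj, rfl⟩ := edgeSet_rowGraph_subset f g J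
      (w.bypass.edges_subset_edgeSet (List.mem_toFinset.mp he))
    exact Finset.mem_image_of_mem _ hj
  have hnonneg : ∀ e, 0 ≤ normSubOnEdge S e := fun e => by
    induction e using Sym2.ind with | _ x y => exact norm_nonneg (S x - S y)
  calc ‖S u - S v‖ ≤ (w.bypass.edges.map (normSubOnEdge S)).sum := norm_sub_le_sum_edges S _
    _ = ∑ e ∈ w.bypass.edges.toFinset, normSubOnEdge S e :=
      (List.sum_toFinset _ w.bypass_isPath.isTrail.edges_nodup).symm
    _ ≤ ∑ e ∈ J.image fun j => s(f j, g j), normSubOnEdge S e :=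
      Finset.sum_le_sum_of_subset_of_nonneg hsub fun e _ _ => hnonneg e
    _ ≤ ∑ j ∈ J, ‖S (f j) - S (g j)‖ := Finset.sum_image_le_of_nonneg fun e _ => hnonneg e

end RowGraph

lemma SimpleGraph.reachable_of_forall_reachable_add_one {G : SimpleGraph ℤ} {m n : ℤ}
    (hmn : m ≤ n) (h : ∀ v, m ≤ v → v < n → G.Reachable v (v + 1)) : G.Reachable m n := by
  induction n, hmn using Int.leInduction with
  | base => rfl
  | succ n hmn ih =>
    exact (ih fun v hv hvn => h v hv (by omega)).trans (h n hmn (by omega))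

structure IsStaircase (f g : ℤ → ℤ) : Prop where
  monotone_left : Monotone f
  left_add_one_le : ∀ j, f (j + 1) ≤ f j + 1
  monotone_right : Monotone g
  right_add_one_le : ∀ j, g (j + 1) ≤ g j + 1
  left_lt_right : ∀ j, f j < g j

def HasRunOfTwos (f g : ℤ → ℤ) (js : ℤ) (n : ℕ) : Prop :=
  ∃ x : ℤ → ℝ, (∀ k, x k = 0 ∨ x k = 1) ∧
    ∀ i : ℕ, i ≤ n → ∑ k ∈ Finset.Ico (f (js + i)) (g (js + i)), x k = 2

namespace IsStaircase

variable {f g : ℤ → ℤ}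

/-- Column `p` of row `j` leaves row `j + 1` when `f (j + 1) = p + 1`; it is then continued by
the column `g j` entering row `j + 1`, which row `j` joins to `p`, and dies if no column enters. -/
def chainStep (f g : ℤ → ℤ) (j p : ℤ) : Option ℤ :=
  if f (j + 1) = p + 1 then if g (j + 1) = g j + 1 then some (g j) else none else some p

def chain (f g : ℤ → ℤ) (js v : ℤ) : ℕ → Option ℤ
  | 0 => some v
  | i + 1 => (chain f g js v i).bind (chainStep f g (js + i))

lemma chainStep_eq_some {j p q : ℤ} :
    chainStep f g j p = some q ↔
      (f (j + 1) = p + 1 ∧ g (j + 1) = g j + 1 ∧ q = g j) ∨ (f (j + 1) ≠ p + 1 ∧ q = p) := by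
  unfold chainStep
  split_ifs <;> simp_all [eq_comm]

lemma chainStep_eq_none {j p : ℤ} :
    chainStep f g j p = none ↔ f (j + 1) = p + 1 ∧ g (j + 1) ≠ g j + 1 := by
  unfold chainStep
  split_ifs <;> simp_all

lemma chain_succ (js v : ℤ) (i : ℕ) :
    chain f g js v (i + 1) = (chain f g js v i).bind (chainStep f g (js + i)) := rfl

lemma exists_chain_of_chain_succ {js v q : ℤ} {i : ℕ} (h : chain f g js v (i + 1) = some q) :
    ∃ p, chain f g js v i = some p ∧ chainStep f g (js + i) p = some q :=
  Option.bind_eq_some_iff.mp h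

lemma chain_succ_eq_bind (js v : ℤ) (i : ℕ) :
    chain f g js v (i + 1) = (chainStep f g js v).bind fun p => chain f g (js + 1) p i := by
  induction i with
  | zero => simp [chain]
  | succ i ih =>
    have hrow : js + ((i + 1 : ℕ) : ℤ) = js + 1 + i := by push_cast; ring
    rw [chain_succ, ih, Option.bind_assoc, hrow]
    rfl

lemma chain_eq_none_of_le {js v : ℤ} {i i' : ℕ} (hii' : i ≤ i') (h : chain f g js v i = none) :
    chain f g js v i' = none := by
  induction i', hii' using Nat.le_induction with
  | base => exact h
  | succ i' _ ih => rw [chain_succ, ih]; rfl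

lemma chain_mem_row (hN : IsStaircase f g) {js v p : ℤ} {i : ℕ} (hfv : f js ≤ v) (hvg : v < g js)
    (h : chain f g js v i = some p) : f (js + i) ≤ p ∧ p < g (js + i) := by
  induction i generalizing p with
  | zero => simp_all [chain]
  | succ i ih =>
    obtain ⟨q, hq, hstep⟩ := exists_chain_of_chain_succ h
    have := ih hq
    have := hN.left_add_one_le (js + i)
    have := hN.monotone_right (by omega : js + i ≤ js + i + 1)
    rw [Nat.cast_succ, ← add_assoc]
    rw [chainStep_eq_some] at hstep
    omega

lemma reachable_of_chain_eq_none (hN : IsStaircase f g) {J : Finset ℤ} {n : ℕ} {js v : ℤ}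
    (hJ : Finset.Icc js (js + n) ⊆ J) (hfv : f js ≤ v) (hvg : v < g js)
    (h : chain f g js v n = none) :
    (rowGraph f g J).Reachable v (v + 1) := by
  induction n generalizing js v with
  | zero => simp [chain] at h
  | succ n ih =>
    have adj : ∀ j, js ≤ j → j ≤ js + 1 → (rowGraph f g J).Adj (f j) (g j) := fun j h₀ h₁ =>
      rowGraph_adj (hJ (Finset.mem_Icc.mpr ⟨h₀, by push_cast; omega⟩)) (hN.left_lt_right j).ne
    have hJ' : Finset.Icc (js + 1) (js + 1 + n) ⊆ J :=
      (Finset.Icc_subset_Icc (by omega) (by push_cast; omega)).trans hJ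
    have hf := hN.left_add_one_le js
    have hg := hN.monotone_right (by omega : js ≤ js + 1)
    rw [chain_succ_eq_bind] at h
    cases hstep : chainStep f g js v with
    | none =>
      obtain ⟨hleave, hgstay⟩ := chainStep_eq_none.mp hstep
      have e₀ : f js = v := by omega
      have e₁ : g (js + 1) = g js := by have := hN.right_add_one_le js; omega
      have h₀ := adj js le_rfl (by omega)
      have h₁ := adj (js + 1) (by omega) le_rfl
      rw [e₀] at h₀
      rw [hleave, e₁] at h₁
      exact h₀.reachable.trans h₁.reachable.symm
    | some p =>
      rw [hstep, Option.bind_some] at h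
      rcases chainStep_eq_some.mp hstep with ⟨hleave, hgrow, rfl⟩ | ⟨hstay, rfl⟩
      · have e₀ : f js = v := by omega
        have h₀ := adj js le_rfl (by omega)
        have h₁ := adj (js + 1) (by omega) le_rfl
        rw [e₀] at h₀
        rw [hleave, hgrow] at h₁
        exact h₀.reachable.trans ((ih hJ' (by omega) (by omega) h).trans h₁.reachable.symm)
      · exact ih hJ' (by omega) (by omega) h

lemma chain_lt_left_and_right_le_of_ne (hN : IsStaircase f g) {js v p q : ℤ} {i i' : ℕ}
    (hfv : f js ≤ v) (hvg : v < g js) (hii' : i ≤ i') (hp : chain f g js v i = some p)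
    (hq : chain f g js v i' = some q) (hpq : p ≠ q) : p < f (js + i') ∧ g (js + i) ≤ q := by
  induction i', hii' using Nat.le_induction generalizing q with
  | base => exact absurd (hp.symm.trans hq) (by simpa using hpq)
  | succ i' hii' ih =>
    obtain ⟨r, hr, hstep⟩ := exists_chain_of_chain_succ hq
    have := hN.chain_mem_row hfv hvg hr
    have := hN.monotone_left (by omega : js + i' ≤ js + i' + 1)
    have := hN.monotone_right (by omega : js + i ≤ js + i')
    rw [Nat.cast_succ, ← add_assoc]
    rw [chainStep_eq_some] at hstep
    by_cases hpr : p = r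
    · subst hpr; omega
    · have := ih hr hpr; omega

lemma chain_ne_chain (hN : IsStaircase f g) {js v₁ v₂ p₁ p₂ : ℤ} {i : ℕ} (hfv₁ : f js ≤ v₁)
    (hvg₁ : v₁ < g js) (hfv₂ : f js ≤ v₂) (hvg₂ : v₂ < g js) (hv : v₁ ≠ v₂)
    (hp₁ : chain f g js v₁ i = some p₁) (hp₂ : chain f g js v₂ i = some p₂) : p₁ ≠ p₂ := by
  induction i generalizing p₁ p₂ with
  | zero => simp_all [chain]
  | succ i ih =>
    obtain ⟨q₁, hq₁, hstep₁⟩ := exists_chain_of_chain_succ hp₁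
    obtain ⟨q₂, hq₂, hstep₂⟩ := exists_chain_of_chain_succ hp₂
    have := ih hq₁ hq₂
    have := hN.chain_mem_row hfv₁ hvg₁ hq₁
    have := hN.chain_mem_row hfv₂ hvg₂ hq₂
    rw [chainStep_eq_some] at hstep₁ hstep₂
    omega

lemma eq_of_chain_mem_row (hN : IsStaircase f g) {js v k p : ℤ} {i i₀ : ℕ} (hfv : f js ≤ v)
    (hvg : v < g js) (hk : chain f g js v i = some k) (hp : chain f g js v i₀ = some p)
    (hfk : f (js + i₀) ≤ k) (hkg : k < g (js + i₀)) : k = p := by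
  by_contra hne
  rcases le_total i i₀ with h | h
  · have := hN.chain_lt_left_and_right_le_of_ne hfv hvg h hk hp hne; omega
  · have := hN.chain_lt_left_and_right_le_of_ne hfv hvg h hp hk (Ne.symm hne); omega

lemma hasRunOfTwos_of_chains (hN : IsStaircase f g) {js v₁ v₂ : ℤ} {n : ℕ} (hfv₁ : f js ≤ v₁)
    (hvg₁ : v₁ < g js) (hfv₂ : f js ≤ v₂) (hvg₂ : v₂ < g js) (hv : v₁ ≠ v₂)
    (h₁ : chain f g js v₁ n ≠ none) (h₂ : chain f g js v₂ n ≠ none) :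
    HasRunOfTwos f g js n := by
  classical
  let visited : ℤ → Prop := fun k =>
    ∃ i ≤ n, chain f g js v₁ i = some k ∨ chain f g js v₂ i = some k
  refine ⟨fun k => if visited k then 1 else 0, fun k => by dsimp only; split_ifs <;> simp,
    fun i hi => ?_⟩
  obtain ⟨p₁, hp₁⟩ := Option.ne_none_iff_exists'.mp fun h => h₁ (chain_eq_none_of_le hi h)
  obtain ⟨p₂, hp₂⟩ := Option.ne_none_iff_exists'.mp fun h => h₂ (chain_eq_none_of_le hi h)
  have hrow₁ := hN.chain_mem_row hfv₁ hvg₁ hp₁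
  have hrow₂ := hN.chain_mem_row hfv₂ hvg₂ hp₂
  have hvisited : {k ∈ Finset.Ico (f (js + i)) (g (js + i)) | visited k} = {p₁, p₂} := by
    ext k
    simp only [Finset.mem_filter, Finset.mem_Ico, Finset.mem_insert, Finset.mem_singleton]
    constructor
    · rintro ⟨⟨hfk, hkg⟩, i', -, hk | hk⟩
      · exact Or.inl (hN.eq_of_chain_mem_row hfv₁ hvg₁ hk hp₁ hfk hkg)
      · exact Or.inr (hN.eq_of_chain_mem_row hfv₂ hvg₂ hk hp₂ hfk hkg)
    · rintro (rfl | rfl)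
      · exact ⟨hrow₁, i, hi, Or.inl hp₁⟩
      · exact ⟨hrow₂, i, hi, Or.inr hp₂⟩
  rw [Finset.sum_boole, hvisited,
    Finset.card_pair (hN.chain_ne_chain hfv₁ hvg₁ hfv₂ hvg₂ hv hp₁ hp₂)]
  norm_num

/-- Two surviving chains would give a run of twos, so all chains of row `0` but possibly that
of `f 0` die, joining `f 0 + 1, …, g 0`; the edge of row `0` joins `f 0` to `g 0`. -/
theorem reachable_of_not_hasRunOfTwos (hN : IsStaircase f g) {n : ℕ}
    (hrun : ¬ HasRunOfTwos f g 0 n) :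
    (rowGraph f g (Finset.Icc 0 n)).Reachable (f 0) (f 0 + 1) := by
  have hJ : Finset.Icc 0 (0 + (n : ℤ)) ⊆ Finset.Icc 0 n := by rw [zero_add]
  have hfg := hN.left_lt_right 0
  by_cases h₀ : chain f g 0 (f 0) n = none
  · exact hN.reachable_of_chain_eq_none hJ le_rfl hfg h₀
  have hdie : ∀ v, f 0 + 1 ≤ v → v < g 0 → chain f g 0 v n = none := fun v hfv hvg => by
    by_contra hv
    exact hrun (hN.hasRunOfTwos_of_chains le_rfl hfg (by omega) hvg (by omega) h₀ hv)
  have hladder : (rowGraph f g (Finset.Icc 0 n)).Reachable (f 0 + 1) (g 0) :=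
    SimpleGraph.reachable_of_forall_reachable_add_one (by omega) fun v hfv hvg =>
      hN.reachable_of_chain_eq_none hJ (by omega) hvg (hdie v hfv hvg)
  exact (rowGraph_adj (Finset.mem_Icc.mpr ⟨le_rfl, by omega⟩) hfg.ne).reachable.trans hladder.symm

end IsStaircase

section Matrix

variable {a b c t : ℝ}

noncomputable def leftEdge (a b t : ℝ) (j : ℤ) : ℤ := ⌈((j : ℝ) * a - t) / b⌉

noncomputable def rightEdge (a b c t : ℝ) (j : ℤ) : ℤ := ⌈((j : ℝ) * a - t + c) / b⌉

lemma mem_Ico_edges_iff (hb : 0 < b) (j k : ℤ) :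
    k ∈ Finset.Ico (leftEdge a b t j) (rightEdge a b c t j) ↔
      0 ≤ t - j * a + k * b ∧ t - j * a + k * b < c := by
  rw [Finset.mem_Ico, leftEdge, rightEdge, Int.ceil_le, Int.lt_ceil, div_le_iff₀ hb, lt_div_iff₀ hb]
  constructor <;> rintro ⟨h₁, h₂⟩ <;> constructor <;> linarith

lemma chiIco_of_mem_Ico_edges (hb : 0 < b) {j k : ℤ}
    (hk : k ∈ Finset.Ico (leftEdge a b t j) (rightEdge a b c t j)) :
    chiIco c (t - j * a + k * b) = 1 :=
  if_pos ((mem_Ico_edges_iff hb j k).mp hk)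

lemma chiIco_of_notMem_Ico_edges (hb : 0 < b) {j k : ℤ}
    (hk : k ∉ Finset.Ico (leftEdge a b t j) (rightEdge a b c t j)) :
    chiIco c (t - j * a + k * b) = 0 :=
  if_neg (mt (mem_Ico_edges_iff hb j k).mpr hk)

lemma Mrow_eq_sum (hb : 0 < b) (x : ℤ → ℝ) (j : ℤ) :
    Mrow a b c t x j = ∑ k ∈ Finset.Ico (leftEdge a b t j) (rightEdge a b c t j), x k := by
  rw [Mrow, tsum_eq_sum fun k hk => by rw [chiIco_of_notMem_Ico_edges hb hk, zero_mul]]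
  exact Finset.sum_congr rfl fun k hk => by rw [chiIco_of_mem_Ico_edges hb hk, one_mul]

lemma MrowC_eq_sum (hb : 0 < b) (z : ℤ → ℂ) (j : ℤ) :
    MrowC a b c t z j = ∑ k ∈ Finset.Ico (leftEdge a b t j) (rightEdge a b c t j), z k := by
  rw [MrowC, tsum_eq_sum fun k hk => by
    rw [chiIco_of_notMem_Ico_edges hb hk, Complex.ofReal_zero, zero_mul]]
  exact Finset.sum_congr rfl fun k hk => by
    rw [chiIco_of_mem_Ico_edges hb hk, Complex.ofReal_one, one_mul]

lemma ceil_div_le_ceil_div_add_one {x y : ℝ} (hb : 0 < b) (h : x ≤ y + b) :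
    ⌈x / b⌉ ≤ ⌈y / b⌉ + 1 := by
  rw [← Int.ceil_add_one, div_add_one hb.ne']
  exact Int.ceil_mono (div_le_div_of_nonneg_right h hb.le)

lemma isStaircase_edges (ha : 0 ≤ a) (hb : 0 < b) (hab : a ≤ b) (hbc : b ≤ c) :
    IsStaircase (leftEdge a b t) (rightEdge a b c t) where
  monotone_left j j' h := Int.ceil_mono (by gcongr)
  left_add_one_le j := ceil_div_le_ceil_div_add_one hb (by push_cast; linarith)
  monotone_right j j' h := Int.ceil_mono (by gcongr)
  right_add_one_le j := ceil_div_le_ceil_div_add_one hb (by push_cast; linarith)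
  left_lt_right j := by
    rw [leftEdge, rightEdge, Int.lt_iff_add_one_le, ← Int.ceil_add_one, div_add_one hb.ne']
    exact Int.ceil_mono (div_le_div_of_nonneg_right (by linarith) hb.le)

lemma leftEdge_zero (ht : t ∈ Set.Ico 0 b) : leftEdge a b t 0 = 0 := by
  have hb : 0 < b := ht.1.trans_lt ht.2
  rw [leftEdge, Int.ceil_eq_iff, Int.cast_zero, zero_mul, zero_sub, lt_div_iff₀ hb,
    div_le_iff₀ hb]
  constructor <;> linarith [ht.1, ht.2]

lemma norm_le_sum_norm_MrowC (ha : 0 ≤ a) (hab : a ≤ b) (hbc : b ≤ c) (ht : t ∈ Set.Ico 0 b)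
    {n : ℕ} (hrun : ¬ HasRunOfTwos (leftEdge a b t) (rightEdge a b c t) 0 n)
    (z : ℤ → ℂ) : ‖z 0‖ ≤ ∑ j ∈ Finset.Icc 0 (n : ℤ), ‖MrowC a b c t z j‖ := by
  have hb : 0 < b := ht.1.trans_lt ht.2
  have hN := isStaircase_edges (t := t) ha hb hab hbc
  have hreach := hN.reachable_of_not_hasRunOfTwos hrun
  rw [leftEdge_zero ht, zero_add] at hreach
  let S : ℤ → ℂ := fun m => ∑ k ∈ Finset.Ico 0 m, z k
  have hrow : ∀ j ∈ Finset.Icc 0 (n : ℤ),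
      ‖S (leftEdge a b t j) - S (rightEdge a b c t j)‖ = ‖MrowC a b c t z j‖ := fun j hj => by
    have h₀ : 0 ≤ leftEdge a b t j :=
      leftEdge_zero (a := a) ht ▸ hN.monotone_left (Finset.mem_Icc.mp hj).1
    have hsplit : S (leftEdge a b t j) + MrowC a b c t z j = S (rightEdge a b c t j) := by
      rw [MrowC_eq_sum hb, ← Finset.sum_union (Finset.Ico_disjoint_Ico_consecutive _ _ _),
        Finset.Ico_union_Ico_eq_Ico h₀ (hN.left_lt_right j).le]
    rw [norm_sub_rev, ← hsplit, add_sub_cancel_left]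
  calc ‖z 0‖ = ‖S 0 - S 1‖ := by
        rw [norm_sub_rev]; simp [S, show Finset.Ico (0 : ℤ) 1 = {0} from rfl]
    _ ≤ _ := norm_sub_le_sum_of_reachable S hreach
    _ = _ := Finset.sum_congr rfl hrow

lemma not_hasRunOfTwos_toNat_Qabc (hb : 0 < b) (hQ : Qabc a b c ≠ ⊤) (t : ℝ) :
    ¬ HasRunOfTwos (leftEdge a b t) (rightEdge a b c t) 0 (Qabc a b c).toNat := by
  rintro ⟨x, hx, hrun⟩
  have hle : (((Qabc a b c).toNat + 1 : ℕ) : ℕ∞) ≤ Qabc a b c :=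
    le_iSup_of_le t <| le_iSup_of_le x <| le_iSup_of_le hx <| le_iSup_of_le _ <|
      le_iSup_of_le ⟨Nat.le_add_left 1 _, 0, fun i hi => by
        rw [Mrow_eq_sum hb]; exact hrun i (Nat.lt_succ_iff.mp hi)⟩ le_rfl
  have := Nat.cast_le.mp (hle.trans_eq (ENat.natCast_toNat hQ).symm)
  omega

end Matrix

lemma sum_Icc_le_tsum_ite {F : ℤ → ℝ} (hF : ∀ j, 0 ≤ F j) {a L : ℝ} (ha : 0 < a) {n : ℕ}
    (hn : n * a ≤ L) :
    ∑ j ∈ Finset.Icc 0 (n : ℤ), F j ≤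
      ∑' j : ℤ, if 0 ≤ (j : ℝ) * a ∧ (j : ℝ) * a ≤ L then F j else 0 := by
  have hsupp : ∀ j ∉ Finset.Icc 0 ⌊L / a⌋,
      (if 0 ≤ (j : ℝ) * a ∧ (j : ℝ) * a ≤ L then F j else 0) = 0 := fun j hj =>
    if_neg fun ⟨h₀, h₁⟩ => hj (Finset.mem_Icc.mpr
      ⟨by exact_mod_cast (mul_nonneg_iff_of_pos_right ha).mp h₀,
        Int.le_floor.mpr ((le_div_iff₀ ha).mpr h₁)⟩)
  have hwindow : ∀ j ∈ Finset.Icc 0 (n : ℤ), 0 ≤ (j : ℝ) * a ∧ (j : ℝ) * a ≤ L := fun j hj => by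
    obtain ⟨h₀, h₁⟩ := Finset.mem_Icc.mp hj
    exact ⟨by positivity, le_trans (by gcongr; exact_mod_cast h₁) hn⟩
  rw [tsum_eq_sum hsupp]
  calc ∑ j ∈ Finset.Icc 0 (n : ℤ), F j
      = ∑ j ∈ Finset.Icc 0 (n : ℤ), if 0 ≤ (j : ℝ) * a ∧ (j : ℝ) * a ≤ L then F j else 0 :=
        Finset.sum_congr rfl fun j hj => (if_pos (hwindow j hj)).symm
    _ ≤ _ := Finset.sum_le_sum_of_subset_of_nonneg
        (Finset.Icc_subset_Icc le_rfl (Int.le_floor.mpr ((le_div_iff₀ ha).mpr (by simpa using hn))))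
        fun j _ _ => by split_ifs <;> simp [hF]

open Classical in
/-- Lemma `infinitematrixstability`: if `Q_{a,b,c} < +∞`, then for every `t ∈ [0,b)` and every
complex vector `z`, `Σ_{μ∈aℤ, 0 ≤ μ ≤ aQ_{a,b,c}+2a+b+c} |(M_{a,b,c}(t)z)(μ)| ≥ (b/(2c))·|z(0)|`. -/
theorem infinite_matrix_stability (a b c : ℝ) (ha : 0 < a) (hab : a < b) (hbc : b < c)
    (hQ : Qabc a b c < ⊤) :
    ∀ t ∈ Set.Ico (0 : ℝ) b, ∀ z : ℤ → ℂ,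
      (b / (2 * c)) * ‖z 0‖ ≤
        ∑' j : ℤ,
          (if 0 ≤ (j : ℝ) * a ∧
              (j : ℝ) * a ≤ a * ((Qabc a b c).toNat : ℝ) + 2 * a + b + c then
            ‖MrowC a b c t z j‖ else 0) := by
  intro t ht z
  have hb : 0 < b := ha.trans hab
  calc b / (2 * c) * ‖z 0‖ ≤ ‖z 0‖ :=
        mul_le_of_le_one_left (norm_nonneg _) ((div_le_one (by linarith)).mpr (by linarith))
    _ ≤ ∑ j ∈ Finset.Icc 0 ((Qabc a b c).toNat : ℤ), ‖MrowC a b c t z j‖ :=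
        norm_le_sum_norm_MrowC ha.le hab.le hbc.le ht (not_hasRunOfTwos_toNat_Qabc hb hQ.ne t) z
    _ ≤ _ := sum_Icc_le_tsum_ite (fun j => norm_nonneg _) ha (by nlinarith)
end

section
/- Let (a,b,c) be a triple of positive real numbers with a < b < c, set c₀ := c − ⌊c/b⌋·b, (c₀+a−b)₊ := max(c₀+a−b, 0), c₀∧a := min(c₀, a), and define λ_{a,b,c}(t) := ⌊c/b⌋b + b if t ∈ [0, (c₀+a−b)₊) + aℤ, λ_{a,b,c}(t) := 0 if t ∈ [(c₀+a−b)₊, c₀∧a) + aℤ, λ_{a,b,c}(t) := ⌊c/b⌋b if t ∈ [c₀∧a, a) + aℤ; and λ̃_{a,b,c}(t) := −⌊c/b⌋b − b if t ∈ [c−(c₀+a−b)₊, c) + aℤ, λ̃_{a,b,c}(t) := 0 if t ∈ [c−c₀∧a, c−(c₀+a−b)₊) + aℤ, λ̃_{a,b,c}(t) := −⌊c/b⌋b if t ∈ [c−a, c−c₀∧a) + aℤ. Then: (i) S_{a,b,c} ∩ (([(c₀+a−b)₊, c₀∧a) ∪ [c−c₀∧a, c−(c₀+a−b)₊)) + aℤ)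 = ∅; and (ii) for every t ∈ S_{a,b,c} and every x ∈ B_b⁰ with M_{a,b,c}(t)x = 1: x(λ) = 0 for every λ ∈ bℤ with λ̃_{a,b,c}(t) < λ < λ_{a,b,c}(t) and λ ≠ 0, while x(λ̃_{a,b,c}(t)) = x(0) = x(λ_{a,b,c}(t)) = 1. -/
open MeasureTheory Set

/-- The periodic set `X + aℤ = {x + ka : x ∈ X, k ∈ ℤ}`. -/
def perSet (a : ℝ) (X : Set ℝ) : Set ℝ := {t : ℝ | ∃ k : ℤ, t - (k : ℝ) * a ∈ X}

/- The function `λ_{a,b,c}`. -/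
open Classical in
noncomputable def lamF (a b c : ℝ) (t : ℝ) : ℝ :=
  if t ∈ perSet a (Set.Ico 0 (max ((c - (⌊c / b⌋ : ℝ) * b) + a - b) 0)) then
    (⌊c / b⌋ : ℝ) * b + b
  else if t ∈ perSet a (Set.Ico (max ((c - (⌊c / b⌋ : ℝ) * b) + a - b) 0)
      (min (c - (⌊c / b⌋ : ℝ) * b) a)) then 0
  else (⌊c / b⌋ : ℝ) * b

/- The function `λ̃_{a,b,c}`. -/
open Classical in
noncomputable def lamTilF (a b c : ℝ) (t : ℝ) : ℝ :=
  if t ∈ perSet a (Set.Ico (c - max ((c - (⌊c / b⌋ : ℝ) * b) + a - b) 0) c) then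
    -((⌊c / b⌋ : ℝ) * b) - b
  else if t ∈ perSet a (Set.Ico (c - min (c - (⌊c / b⌋ : ℝ) * b) a)
      (c - max ((c - (⌊c / b⌋ : ℝ) * b) + a - b) 0)) then 0
  else -((⌊c / b⌋ : ℝ) * b)

/-!
Every row of `M_{a,b,c}(t)x = 1` sees exactly one `k` with `x k = 1` in its window
`t - μ + kb ∈ [0, c)`. Hence, if `p < q` are consecutive ones of `x`, no row index `μ ∈ aℤ` lies
between `t + pb` and `t + qb - c`. Applied to the ones next to `0`, this traps `mb`, the first
positive one, in `[c - ρ, c - ρ + a)` with `ρ = t mod a`, and `-m'b`, the last negative one, in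
`(c - σ, c - σ + a]` with `σ = (c - t) mod a ∈ (0, a]`. Since `a < b` and `c - ⌊c/b⌋b = c₀ < b`,
these intervals contain `⌊c/b⌋b` or `⌊c/b⌋b + b` according to the position of `ρ` (resp. `σ`)
relative to `(c₀ + a - b)₊` and `c₀ ∧ a`, and no multiple of `b` when `t` lies in the
forbidden set.
-/

lemma lt_of_intCast_mul_lt_mul_right {b : ℝ} (hb : 0 < b) {m n : ℤ} (h : (m : ℝ) * b < n * b) :
    m < n := by
  exact_mod_cast lt_of_mul_lt_mul_right h hb.le

lemma perSet_union (a : ℝ) (X Y : Set ℝ) : perSet a (X ∪ Y) = perSet a X ∪ perSet a Y := by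
  ext t
  simp only [perSet, mem_ofPred_eq, mem_union, exists_or]

lemma mem_perSet_Ico_iff {a α β : ℝ} (ha : 0 < a) (hα : 0 ≤ α) (hβ : β ≤ a) (t : ℝ) :
    t ∈ perSet a (Ico α β) ↔ toIcoMod ha 0 t ∈ Ico α β := by
  constructor
  · rintro ⟨k, hk⟩
    rwa [(toIcoMod_eq_iff ha (c := t - k * a)).2
      ⟨⟨by linarith [hk.1], by linarith [hk.2]⟩, k, by simp⟩]
  · exact fun h => ⟨toIcoDiv ha 0 t, by rwa [← zsmul_eq_mul, self_sub_toIcoDiv_zsmul]⟩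

lemma mem_perSet_Ico_sub_iff {a α β : ℝ} (ha : 0 < a) (hα : 0 ≤ α) (hβ : β ≤ a) (c t : ℝ) :
    t ∈ perSet a (Ico (c - β) (c - α)) ↔ toIocMod ha 0 (c - t) ∈ Ioc α β := by
  constructor
  · rintro ⟨k, hk₁, hk₂⟩
    rw [(toIocMod_eq_iff ha (c := c - t + k * a)).2 ⟨⟨by linarith, by linarith⟩, -k, by simp⟩]
    exact ⟨by linarith, by linarith⟩
  · rintro ⟨h₁, h₂⟩
    refine ⟨-toIocDiv ha 0 (c - t), ?_⟩
    rw [← self_sub_toIocDiv_zsmul, zsmul_eq_mul] at h₁ h₂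
    push_cast
    constructor <;> linarith

lemma chiIco_mul_eq_ite {c y z : ℝ} (hz : z = 0 ∨ z = 1) :
    chiIco c y * z = if z = 1 ∧ y ∈ Ico 0 c then 1 else 0 := by
  rcases hz with rfl | rfl <;> simp [chiIco, mem_Ico]

section Rows

variable {a b c t : ℝ} {x : ℤ → ℝ}

lemma existsUnique_hit (hx : ∀ k, x k = 0 ∨ x k = 1) {j : ℤ} (hM : Mrow a b c t x j = 1) :
    ∃! k : ℤ, x k = 1 ∧ t - j * a + k * b ∈ Ico 0 c := by
  classical
  simp_rw [Mrow, chiIco_mul_eq_ite (hx _)] at hM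
  obtain ⟨k, hk⟩ : ∃ k : ℤ, x k = 1 ∧ t - j * a + k * b ∈ Ico 0 c := by
    by_contra! h
    have hzero : ∀ k : ℤ, (if x k = 1 ∧ t - j * a + k * b ∈ Ico 0 c then (1 : ℝ) else 0) = 0 :=
      fun k => if_neg fun hk => h k hk.1 hk.2
    simp only [hzero, tsum_zero] at hM
    exact zero_ne_one hM
  refine ⟨k, hk, fun k' hk' => by_contra fun hne => ?_⟩
  have hs : Summable fun i : ℤ =>
      if x i = 1 ∧ t - j * a + i * b ∈ Ico 0 c then (1 : ℝ) else 0 := by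
    by_contra hs
    rw [tsum_eq_zero_of_not_summable hs] at hM
    exact zero_ne_one hM
  have := hs.sum_le_tsum {k', k} (fun i _ => by split_ifs <;> norm_num)
  rw [Finset.sum_pair hne, hM, if_pos hk, if_pos hk'] at this
  norm_num at this

/-- A row `μ = ja` in `(t + qb - c, t + pb]` would see both ones `p` and `q`, a row in
`(t + pb, t + qb - c]` would see none. -/
lemma mul_le_iff_of_consecutive (hx : ∀ k, x k = 0 ∨ x k = 1)
    (hM : ∀ j, Mrow a b c t x j = 1) (hb : 0 < b) {p q : ℤ} (hpq : p < q) (hp : x p = 1)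
    (hq : x q = 1) (hgap : ∀ k, p < k → k < q → x k ≠ 1) (j : ℤ) :
    j * a ≤ t + p * b ↔ j * a ≤ t + q * b - c := by
  have hpqb : (p : ℝ) * b < q * b := by gcongr
  obtain ⟨k, ⟨hxk, hk₀, hkc⟩, huniq⟩ := existsUnique_hit hx (hM j)
  constructor
  · intro hjp
    by_contra! hjq
    have hp' := huniq p ⟨hp, by linarith, by linarith⟩
    have hq' := huniq q ⟨hq, by linarith, by linarith⟩
    omega
  · intro hjq
    by_contra! hjp
    exact hgap k (lt_of_intCast_mul_lt_mul_right hb (by linarith))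
      (lt_of_intCast_mul_lt_mul_right hb (by linarith)) hxk

lemma exists_first_pos_one (hx : ∀ k, x k = 0 ∨ x k = 1)
    (hM : ∀ j, Mrow a b c t x j = 1) (ha : 0 < a) (hb : 0 < b) :
    ∃ m : ℤ, 0 < m ∧ x m = 1 ∧ ∀ k, 0 < k → k < m → x k ≠ 1 := by
  obtain ⟨j, hj⟩ := exists_int_gt (t / a)
  rw [div_lt_iff₀ ha] at hj
  obtain ⟨k, ⟨hxk, hk₀, -⟩, -⟩ := existsUnique_hit hx (hM j)
  have hk : 0 < k := lt_of_intCast_mul_lt_mul_right hb (m := 0) (by push_cast; linarith)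
  obtain ⟨m, ⟨hm, hxm⟩, hmin⟩ :=
    Int.exists_least_of_bdd ⟨0, fun z (hz : 0 < z ∧ x z = 1) => hz.1.le⟩ ⟨k, hk, hxk⟩
  exact ⟨m, hm, hxm, fun k hk hkm hxk => (hmin k ⟨hk, hxk⟩).not_gt hkm⟩

lemma exists_last_neg_one (hx : ∀ k, x k = 0 ∨ x k = 1)
    (hM : ∀ j, Mrow a b c t x j = 1) (ha : 0 < a) (hb : 0 < b) :
    ∃ m : ℤ, m < 0 ∧ x m = 1 ∧ ∀ k, m < k → k < 0 → x k ≠ 1 := by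
  obtain ⟨j, hj⟩ := exists_int_lt ((t - c) / a)
  rw [lt_div_iff₀ ha] at hj
  obtain ⟨k, ⟨hxk, -, hkc⟩, -⟩ := existsUnique_hit hx (hM j)
  have hk : k < 0 := lt_of_intCast_mul_lt_mul_right hb (n := 0) (by push_cast; linarith)
  obtain ⟨m, ⟨hm, hxm⟩, hmax⟩ :=
    Int.exists_greatest_of_bdd ⟨0, fun z (hz : z < 0 ∧ x z = 1) => hz.1.le⟩ ⟨k, hk, hxk⟩
  exact ⟨m, hm, hxm, fun k hmk hk hxk => (hmax k ⟨hk, hxk⟩).not_gt hmk⟩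

lemma mul_mem_Ico_of_first_pos_one (hx : ∀ k, x k = 0 ∨ x k = 1) (hM : ∀ j, Mrow a b c t x j = 1)
    (ha : 0 < a) (hb : 0 < b) (hx0 : x 0 = 1) {m : ℤ}
    (hm : 0 < m) (hxm : x m = 1) (hgap : ∀ k, 0 < k → k < m → x k ≠ 1) :
    m * b ∈ Ico (c - toIcoMod ha 0 t) (c - toIcoMod ha 0 t + a) := by
  have hrows := mul_le_iff_of_consecutive hx hM hb hm hx0 hxm hgap
  have hρ := toIcoMod_mem_Ico' ha t
  have hn : t - toIcoDiv ha 0 t * a = toIcoMod ha 0 t := by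
    rw [← zsmul_eq_mul, self_sub_toIcoDiv_zsmul]
  have h₁ := (hrows (toIcoDiv ha 0 t)).1 (by push_cast; linarith [hρ.1])
  have h₂ := mt (hrows (toIcoDiv ha 0 t + 1)).2 (by push_cast; linarith [hρ.2])
  push_cast at h₂
  constructor <;> linarith

lemma neg_mul_mem_Ioc_of_last_neg_one (hx : ∀ k, x k = 0 ∨ x k = 1) (hM : ∀ j, Mrow a b c t x j = 1)
    (ha : 0 < a) (hb : 0 < b) (hx0 : x 0 = 1) {m : ℤ}
    (hm : m < 0) (hxm : x m = 1) (hgap : ∀ k, m < k → k < 0 → x k ≠ 1) :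
    -m * b ∈ Ioc (c - toIocMod ha 0 (c - t)) (c - toIocMod ha 0 (c - t) + a) := by
  have hrows := mul_le_iff_of_consecutive hx hM hb hm hxm hx0 hgap
  have hσ := toIocMod_mem_Ioc ha 0 (c - t)
  have hn : c - t - toIocDiv ha 0 (c - t) * a = toIocMod ha 0 (c - t) := by
    rw [← zsmul_eq_mul, self_sub_toIocDiv_zsmul]
  have h₁ := mt (hrows (-toIocDiv ha 0 (c - t))).1 (by push_cast; linarith [hσ.1])
  have h₂ := (hrows (-toIocDiv ha 0 (c - t) - 1)).2 (by push_cast; linarith [hσ.2])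
  push_cast at h₁ h₂
  constructor <;> linarith

end Rows

section Lambda

variable {a b c c₀ P Q : ℝ}

lemma mem_Ico_of_eq_sub_floor_div_mul (hb : 0 < b) (hc0 : c₀ = c - ⌊c / b⌋ * b) : c₀ ∈ Ico 0 b :=
  hc0 ▸ ⟨Int.sub_floor_div_mul_nonneg c hb, Int.sub_floor_div_mul_lt c hb⟩

lemma nonneg_and_le_and_le_of_eq_max_of_eq_min (ha : 0 < a) (hab : a < b)
    (hc0 : c₀ = c - ⌊c / b⌋ * b) (hP : P = max (c₀ + a - b) 0) (hQ : Q = min c₀ a) : 0 ≤ P ∧ P ≤ Q ∧ Q ≤ a := by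
  obtain ⟨hc₀, hc₀b⟩ := mem_Ico_of_eq_sub_floor_div_mul (ha.trans hab) hc0
  subst hP hQ
  exact ⟨le_max_right _ _, max_le (le_min (by linarith) (by linarith)) (le_min hc₀ ha.le),
    min_le_right _ _⟩

lemma eq_floor_of_mul_mem_Ico (ha : 0 < a) (hab : a < b) (hc0 : c₀ = c - ⌊c / b⌋ * b) {ρ : ℝ}
    (hρ : ρ ∈ Ico 0 a) {m : ℤ} (hm : m * b ∈ Ico (c - ρ) (c - ρ + a)) :
    (ρ < c₀ + a - b ∧ m = ⌊c / b⌋ + 1) ∨ (c₀ ≤ ρ ∧ m = ⌊c / b⌋) := by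
  have hb := ha.trans hab
  obtain ⟨hc₀, hc₀b⟩ := mem_Ico_of_eq_sub_floor_div_mul hb hc0
  obtain ⟨hm₁, hm₂⟩ := hm
  obtain ⟨hρ₀, hρa⟩ := hρ
  rcases lt_or_ge ρ (c₀ + a - b) with h | h
  · have h₁ := lt_of_intCast_mul_lt_mul_right hb (m := ⌊c / b⌋) (n := m) (by linarith)
    have h₂ := lt_of_intCast_mul_lt_mul_right hb (m := m) (n := ⌊c / b⌋ + 2)
      (by push_cast; linarith)
    exact Or.inl ⟨h, by omega⟩
  · have h₁ := lt_of_intCast_mul_lt_mul_right hb (m := ⌊c / b⌋ - 1) (n := m)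
      (by push_cast; linarith)
    have h₂ := lt_of_intCast_mul_lt_mul_right hb (m := m) (n := ⌊c / b⌋ + 1)
      (by push_cast; linarith)
    obtain rfl : m = ⌊c / b⌋ := by omega
    exact Or.inr ⟨by linarith, rfl⟩

lemma eq_floor_of_mul_mem_Ioc (ha : 0 < a) (hab : a < b) (hc0 : c₀ = c - ⌊c / b⌋ * b) {σ : ℝ}
    (hσ : σ ∈ Ioc 0 a) {m : ℤ} (hm : m * b ∈ Ioc (c - σ) (c - σ + a)) :
    (σ ≤ c₀ + a - b ∧ m = ⌊c / b⌋ + 1) ∨ (c₀ < σ ∧ m = ⌊c / b⌋) := by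
  have hb := ha.trans hab
  obtain ⟨hc₀, hc₀b⟩ := mem_Ico_of_eq_sub_floor_div_mul hb hc0
  obtain ⟨hm₁, hm₂⟩ := hm
  obtain ⟨hσ₀, hσa⟩ := hσ
  rcases le_or_gt σ (c₀ + a - b) with h | h
  · have h₁ := lt_of_intCast_mul_lt_mul_right hb (m := ⌊c / b⌋) (n := m) (by linarith)
    have h₂ := lt_of_intCast_mul_lt_mul_right hb (m := m) (n := ⌊c / b⌋ + 2)
      (by push_cast; linarith)
    exact Or.inl ⟨h, by omega⟩
  · have h₁ := lt_of_intCast_mul_lt_mul_right hb (m := ⌊c / b⌋ - 1) (n := m)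
      (by push_cast; linarith)
    have h₂ := lt_of_intCast_mul_lt_mul_right hb (m := m) (n := ⌊c / b⌋ + 1)
      (by push_cast; linarith)
    obtain rfl : m = ⌊c / b⌋ := by omega
    exact Or.inr ⟨by linarith, rfl⟩

lemma lamF_eq_and_not_mem (ha : 0 < a) (hab : a < b) (hc0 : c₀ = c - ⌊c / b⌋ * b)
    (hP : P = max (c₀ + a - b) 0) (hQ : Q = min c₀ a) {t : ℝ} {m : ℤ}
    (hm : m * b ∈ Ico (c - toIcoMod ha 0 t) (c - toIcoMod ha 0 t + a)) :
    lamF a b c t = m * b ∧ t ∉ perSet a (Ico P Q) := by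
  obtain ⟨hP₀, hPQ, hQa⟩ := nonneg_and_le_and_le_of_eq_max_of_eq_min ha hab hc0 hP hQ
  have hρ := toIcoMod_mem_Ico' ha t
  unfold lamF
  rw [← hc0, ← hP, ← hQ, mem_perSet_Ico_iff ha le_rfl (hPQ.trans hQa),
    mem_perSet_Ico_iff ha hP₀ hQa]
  rcases eq_floor_of_mul_mem_Ico ha hab hc0 hρ hm with ⟨h, rfl⟩ | ⟨h, rfl⟩
  · have hρP : toIcoMod ha 0 t < P := hP ▸ lt_max_of_lt_left h
    rw [if_pos ⟨hρ.1, hρP⟩]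
    exact ⟨by push_cast; ring, fun h' => h'.1.not_gt hρP⟩
  · have hQρ : Q ≤ toIcoMod ha 0 t := hQ ▸ (min_le_left _ _).trans h
    rw [if_neg fun h' => h'.2.not_ge (hPQ.trans hQρ), if_neg fun h' => h'.2.not_ge hQρ]
    exact ⟨rfl, fun h' => h'.2.not_ge hQρ⟩

lemma lamTilF_eq_and_not_mem (ha : 0 < a) (hab : a < b) (hc0 : c₀ = c - ⌊c / b⌋ * b)
    (hP : P = max (c₀ + a - b) 0) (hQ : Q = min c₀ a) {t : ℝ} {m : ℤ}
    (hm : -m * b ∈ Ioc (c - toIocMod ha 0 (c - t)) (c - toIocMod ha 0 (c - t) + a)) :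
    lamTilF a b c t = m * b ∧ t ∉ perSet a (Ico (c - Q) (c - P)) := by
  obtain ⟨hP₀, hPQ, hQa⟩ := nonneg_and_le_and_le_of_eq_max_of_eq_min ha hab hc0 hP hQ
  have hσ := toIocMod_mem_Ioc ha 0 (c - t)
  rw [zero_add] at hσ
  have hmem₀ := mem_perSet_Ico_sub_iff ha le_rfl (hPQ.trans hQa) c t
  rw [sub_zero] at hmem₀
  unfold lamTilF
  rw [← hc0, ← hP, ← hQ, hmem₀, mem_perSet_Ico_sub_iff ha hP₀ hQa]
  rcases eq_floor_of_mul_mem_Ioc ha hab hc0 hσ (m := -m) (by push_cast; exact hm)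
    with ⟨h, hm'⟩ | ⟨h, hm'⟩
  · have hσP : toIocMod ha 0 (c - t) ≤ P := hP ▸ le_max_of_le_left h
    rw [if_pos ⟨hσ.1, hσP⟩, show m = -(⌊c / b⌋ + 1) by omega]
    exact ⟨by push_cast; ring, fun h' => h'.1.not_ge hσP⟩
  · have hQσ : Q < toIocMod ha 0 (c - t) := hQ ▸ (min_le_left _ _).trans_lt h
    rw [if_neg fun h' => h'.2.not_gt (hPQ.trans_lt hQσ), if_neg fun h' => h'.2.not_gt hQσ,
      show m = -⌊c / b⌋ by omega]
    exact ⟨by push_cast; ring, fun h' => h'.2.not_gt hQσ⟩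

end Lambda

section Solutions

variable {a b c c₀ P Q t : ℝ} {x : ℤ → ℝ}

lemma exists_first_pos_one_lamF_eq (ha : 0 < a) (hab : a < b) (hc0 : c₀ = c - ⌊c / b⌋ * b)
    (hP : P = max (c₀ + a - b) 0) (hQ : Q = min c₀ a) (hx : ∀ k, x k = 0 ∨ x k = 1)
    (hx0 : x 0 = 1) (hM : ∀ j, Mrow a b c t x j = 1) :
    ∃ m : ℤ, 0 < m ∧ x m = 1 ∧ (∀ k, 0 < k → k < m → x k ≠ 1) ∧
      lamF a b c t = m * b ∧ t ∉ perSet a (Ico P Q) := by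
  have hb := ha.trans hab
  obtain ⟨m, hm, hxm, hgap⟩ := exists_first_pos_one hx hM ha hb
  exact ⟨m, hm, hxm, hgap, lamF_eq_and_not_mem ha hab hc0 hP hQ
    (mul_mem_Ico_of_first_pos_one hx hM ha hb hx0 hm hxm hgap)⟩

lemma exists_last_neg_one_lamTilF_eq (ha : 0 < a) (hab : a < b) (hc0 : c₀ = c - ⌊c / b⌋ * b)
    (hP : P = max (c₀ + a - b) 0) (hQ : Q = min c₀ a) (hx : ∀ k, x k = 0 ∨ x k = 1)
    (hx0 : x 0 = 1) (hM : ∀ j, Mrow a b c t x j = 1) :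
    ∃ m : ℤ, m < 0 ∧ x m = 1 ∧ (∀ k, m < k → k < 0 → x k ≠ 1) ∧
      lamTilF a b c t = m * b ∧ t ∉ perSet a (Ico (c - Q) (c - P)) := by
  have hb := ha.trans hab
  obtain ⟨m, hm, hxm, hgap⟩ := exists_last_neg_one hx hM ha hb
  exact ⟨m, hm, hxm, hgap, lamTilF_eq_and_not_mem ha hab hc0 hP hQ
    (neg_mul_mem_Ioc_of_last_neg_one hx hM ha hb hx0 hm hxm hgap)⟩

end Solutions

theorem S_blackhole_disjoint_and_first_indices_general (a b c c₀ P Q : ℝ)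
    (ha : 0 < a) (hab : a < b)
    (hc0 : c₀ = c - (⌊c / b⌋ : ℝ) * b)
    (hP : P = max (c₀ + a - b) 0) (hQ : Q = min c₀ a) :
    Sset a b c ∩ perSet a (Set.Ico P Q ∪ Set.Ico (c - Q) (c - P)) = ∅ ∧
    ∀ t ∈ Sset a b c, ∀ x : ℤ → ℝ,
      (∀ k, x k = 0 ∨ x k = 1) → x 0 = 1 → (∀ j : ℤ, Mrow a b c t x j = 1) →
        (∀ k : ℤ, lamTilF a b c t < (k : ℝ) * b → (k : ℝ) * b < lamF a b c t → k ≠ 0 →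
          x k = 0) ∧
        (∀ k : ℤ, ((k : ℝ) * b = lamF a b c t ∨ k = 0 ∨ (k : ℝ) * b = lamTilF a b c t) →
          x k = 1) := by
  have hb : 0 < b := ha.trans hab
  refine ⟨eq_empty_iff_forall_notMem.2 fun t ⟨⟨x, hx, hx0, hM⟩, ht⟩ => ?_,
    fun t _ x hx hx0 hM => ?_⟩
  · obtain ⟨-, -, -, -, -, hPQ⟩ := exists_first_pos_one_lamF_eq ha hab hc0 hP hQ hx hx0 hM
    obtain ⟨-, -, -, -, -, hcQP⟩ := exists_last_neg_one_lamTilF_eq ha hab hc0 hP hQ hx hx0 hM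
    rw [perSet_union] at ht
    exact ht.elim hPQ hcQP
  obtain ⟨m, -, hxm, hgap, hlam, -⟩ := exists_first_pos_one_lamF_eq ha hab hc0 hP hQ hx hx0 hM
  obtain ⟨m', -, hxm', hgap', hlam', -⟩ :=
    exists_last_neg_one_lamTilF_eq ha hab hc0 hP hQ hx hx0 hM
  rw [hlam, hlam']
  refine ⟨fun k hk₁ hk₂ hk₀ => (hx k).resolve_right ?_, fun k hk => ?_⟩
  · rcases hk₀.lt_or_gt with hk | hk
    · exact hgap' k (lt_of_intCast_mul_lt_mul_right hb hk₁) hk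
    · exact hgap k hk (lt_of_intCast_mul_lt_mul_right hb hk₂)
  · rcases hk with hk | rfl | hk
    · rwa [Int.cast_inj.1 (mul_right_cancel₀ hb.ne' hk)]
    · exact hx0
    · rwa [Int.cast_inj.1 (mul_right_cancel₀ hb.ne' hk)]

/-- Proposition `dabcbasic1`: with `c₀ = c − ⌊c/b⌋·b`, `P = (c₀+a−b)₊`, `Q = c₀∧a`:
(i) `S_{a,b,c} ∩ (([P,Q) ∪ [c−Q, c−P)) + aℤ) = ∅`;
(ii) for `t ∈ S_{a,b,c}` and binary `x` with `x(0)=1` and `M_{a,b,c}(t)x = 1`, one has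
`x(λ) = 0` for `λ̃_{a,b,c}(t) < λ < λ_{a,b,c}(t)`, `λ ≠ 0`, and
`x(λ) = 1` for `λ ∈ {λ_{a,b,c}(t), 0, λ̃_{a,b,c}(t)}`. -/
theorem S_blackhole_disjoint_and_first_indices (a b c c₀ P Q : ℝ)
    (ha : 0 < a) (hab : a < b) (hbc : b < c)
    (hc0 : c₀ = c - (⌊c / b⌋ : ℝ) * b)
    (hP : P = max (c₀ + a - b) 0) (hQ : Q = min c₀ a) :
    Sset a b c ∩ perSet a (Set.Ico P Q ∪ Set.Ico (c - Q) (c - P)) = ∅ ∧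
    ∀ t ∈ Sset a b c, ∀ x : ℤ → ℝ,
      (∀ k, x k = 0 ∨ x k = 1) → x 0 = 1 → (∀ j : ℤ, Mrow a b c t x j = 1) →
        (∀ k : ℤ, lamTilF a b c t < (k : ℝ) * b → (k : ℝ) * b < lamF a b c t → k ≠ 0 →
          x k = 0) ∧
        (∀ k : ℤ, ((k : ℝ) * b = lamF a b c t ∨ k = 0 ∨ (k : ℝ) * b = lamTilF a b c t) →
          x k = 1) :=
  S_blackhole_disjoint_and_first_indices_general a b c c₀ P Q ha hab hc0 hP hQ
end

section
/- Let (a,b,c) be a triple of positive real numbers with a < b < c and b − a < c₀ < a, where c₀ := c − ⌊c/b⌋·b. Then: (i) R_{a,b,c}(D_{a,b,c}) = R̃_{a,b,c}(D_{a,b,c}) = D_{a,b,c} and R_{a,b,c}(S_{a,b,c}) = R̃_{a,b,c}(S_{a,b,c}) = S_{a,b,c} (image sets); (ii) R_{a,b,c}(R̃_{a,b,c}(t)) = t and R̃_{a,b,c}(R_{a,b,c}(t)) = t for every t ∈ S_{a,b,c} (hence also for every t ∈ D_{a,b,c}); (iii) for every Lebesgue-measurable set E ⊆ S_{a,b,c}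 (and in particular every measurable E ⊆ D_{a,b,c}), the Lebesgue measures satisfy |R_{a,b,c}(E)| = |R̃_{a,b,c}(E)| = |E|. -/
open MeasureTheory Set

/- The piecewise linear transformation `R_{a,b,c}`. -/
open Classical in
noncomputable def Rmap (a b c : ℝ) (t : ℝ) : ℝ :=
  if t ∈ perSet a (Set.Ico 0 ((c - (⌊c / b⌋ : ℝ) * b) + a - b)) then
    t + (⌊c / b⌋ : ℝ) * b + b
  else if t ∈ perSet a (Set.Ico ((c - (⌊c / b⌋ : ℝ) * b) + a - b) (c - (⌊c / b⌋ : ℝ) * b)) then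
    t
  else t + (⌊c / b⌋ : ℝ) * b

/- The piecewise linear transformation `R̃_{a,b,c}`. -/
open Classical in
noncomputable def Rtil (a b c : ℝ) (t : ℝ) : ℝ :=
  if t ∈ perSet a (Set.Ico (c - a) (c - (c - (⌊c / b⌋ : ℝ) * b))) then
    t - (⌊c / b⌋ : ℝ) * b
  else if t ∈ perSet a
      (Set.Ico (c - (c - (⌊c / b⌋ : ℝ) * b)) (c + b - (c - (⌊c / b⌋ : ℝ) * b) - a)) then
    t
  else t - (⌊c / b⌋ : ℝ) * b - b

/-!
Let `x` be a binary vector with `x 0 = 1` and all row sums of `M_{a,b,c}(t) x` equal to `r`.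
Two consecutive rows `μ` and `μ + a` of `M_{a,b,c}(t)` see windows of `x` that differ only at
their ends, so equality of their sums forces one entry of `x` to equal `x 0 = 1`. Reading the
rows where `t - μ ∈ [0, a)` this entry is `x (N + 1)` or `x N` (`N = ⌊c/b⌋`), depending on the
piece of `[0, a)` containing `t - μ`, while the middle piece, on which `R_{a,b,c}` is the
identity, is impossible; so `R_{a,b,c} t = t + m b` with `x m = 1`, and shifting `x` by `m`
shows that `R_{a,b,c} t` lies in the same set. Rows with `t - μ ∈ [c - a, c)` treat `R̃_{a,b,c}`
the same way. On the pieces actually met the two maps are mutually inverse translations, hence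
bijections of `S_{a,b,c}` and `D_{a,b,c}` that preserve Lebesgue measure.
-/

def binarySolSet (a b c r : ℝ) : Set ℝ :=
  {t : ℝ | ∃ x : ℤ → ℝ, (∀ k, x k = 0 ∨ x k = 1) ∧ x 0 = 1 ∧ ∀ j : ℤ, Mrow a b c t x j = r}

theorem Mrow_shift (a b c t : ℝ) (x : ℤ → ℝ) (m j : ℤ) :
    Mrow a b c (t + m * b) (fun k => x (k + m)) j = Mrow a b c t x j := by
  unfold Mrow
  refine (tsum_congr fun k => ?_).trans
    ((Equiv.addRight m).tsum_eq fun i => chiIco c (t - j * a + i * b) * x i)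
  simp only [Equiv.coe_addRight]
  congr 2
  push_cast
  ring

theorem add_mul_mem_binarySolSet {a b c r t : ℝ} {x : ℤ → ℝ} (hbin : ∀ k, x k = 0 ∨ x k = 1)
    (hrow : ∀ j : ℤ, Mrow a b c t x j = r) {m : ℤ} (hm : x m = 1) :
    t + m * b ∈ binarySolSet a b c r :=
  ⟨fun k => x (k + m), fun _ => hbin _, by simpa using hm,
    fun j => (Mrow_shift a b c t x m j).trans (hrow j)⟩

theorem int_le_iff_le_add_mul {b v w : ℝ} (hb : 0 < b) {lo : ℤ} (h : v + lo * b ∈ Ico w (w + b))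
    (k : ℤ) : lo ≤ k ↔ w ≤ v + k * b := by
  constructor
  · intro hk
    have : (lo : ℝ) ≤ k := by exact_mod_cast hk
    nlinarith [h.1]
  · intro hk
    by_contra! hlt
    have : (k : ℝ) + 1 ≤ lo := by exact_mod_cast hlt
    nlinarith [h.2]

theorem Mrow_eq_sum_Icc {a b c t : ℝ} (x : ℤ → ℝ) {j lo hi : ℤ} (hb : 0 < b)
    (hlo : t - j * a + lo * b ∈ Ico 0 b) (hhi : t - j * a + hi * b ∈ Ico (c - b) c) :
    Mrow a b c t x j = ∑ k ∈ Finset.Icc lo hi, x k := by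
  have hlo' := int_le_iff_le_add_mul hb (by rwa [zero_add])
  have hhi' := int_le_iff_le_add_mul (v := t - j * a) (w := c) (lo := hi + 1) hb
    (by push_cast; constructor <;> linarith [hhi.1, hhi.2])
  have hchi : ∀ k : ℤ, chiIco c (t - j * a + k * b) = if k ∈ Finset.Icc lo hi then 1 else 0 := by
    intro k
    have hmem : k ∈ Finset.Icc lo hi ↔ 0 ≤ t - j * a + k * b ∧ t - j * a + k * b < c := by
      rw [Finset.mem_Icc]
      exact and_congr (hlo' k) (by rw [← Int.lt_add_one_iff, ← not_le, hhi' k, not_le])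
    simp only [chiIco, hmem]
  unfold Mrow
  rw [tsum_eq_sum (s := Finset.Icc lo hi) fun k hk => by rw [hchi, if_neg hk, zero_mul]]
  exact Finset.sum_congr rfl fun k hk => by rw [hchi, if_pos hk, one_mul]

theorem sum_Icc_eq_add_sum_Icc (f : ℤ → ℝ) {lo hi : ℤ} (h : lo ≤ hi) :
    ∑ k ∈ Finset.Icc lo hi, f k = f lo + ∑ k ∈ Finset.Icc (lo + 1) hi, f k := by
  rw [Finset.Icc_add_one_left_eq_Ioc, Finset.add_sum_Ioc_eq_sum_Icc h]

theorem sum_Icc_add_one_right (f : ℤ → ℝ) {lo hi : ℤ} (h : lo ≤ hi + 1) :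
    ∑ k ∈ Finset.Icc lo (hi + 1), f k = ∑ k ∈ Finset.Icc lo hi, f k + f (hi + 1) := by
  rw [← Finset.sum_Ico_add_eq_sum_Icc h, ← Finset.Icc_sub_one_right_eq_Ico, add_sub_cancel_right]

theorem measurableSet_perSet (a : ℝ) {X : Set ℝ} (hX : MeasurableSet X) :
    MeasurableSet (perSet a X) := by
  have : perSet a X = ⋃ k : ℤ, (fun t => t - k * a) ⁻¹' X := by
    ext t
    simp [perSet]
  rw [this]
  exact .iUnion fun k => hX.preimage (measurable_id.sub_const _)

theorem perSet_Ico_disjoint {a α β γ δ : ℝ} (ha : 0 < a) (hβγ : β ≤ γ) (hδ : δ ≤ α + a) :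
    Disjoint (perSet a (Ico α β)) (perSet a (Ico γ δ)) := by
  refine Set.disjoint_left.2 fun t ⟨k, hk⟩ ⟨k', hk'⟩ => ?_
  have hpos : (0 : ℝ) < (k - k' : ℤ) * a := by push_cast; linarith [hk.2, hk'.1]
  have hlt : ((k - k' : ℤ) : ℝ) * a < 1 * a := by push_cast; linarith [hk.1, hk'.2]
  have h₀ : (0 : ℝ) < (k - k' : ℤ) := pos_of_mul_pos_left hpos ha.le
  have h₁ : ((k - k' : ℤ) : ℝ) < 1 := lt_of_mul_lt_mul_right hlt ha.le
  norm_cast at h₀ h₁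
  omega

theorem exists_sub_mul_mem_Ico {a : ℝ} (ha : 0 < a) (t α : ℝ) :
    ∃ l : ℤ, t - l * a ∈ Ico α (α + a) := by
  simpa only [zsmul_eq_mul] using (existsUnique_sub_zsmul_mem_Ico ha t α).exists

section Pieces

variable {a b c c₀ t : ℝ} {N : ℤ}

theorem Rmap_apply_of_mem_lower (hN : ⌊c / b⌋ = N) (hc : c = N * b + c₀)
    (ht : t ∈ perSet a (Ico 0 (c₀ + a - b))) : Rmap a b c t = t + (N + 1) * b := by
  unfold Rmap
  rw [hN, show c - N * b = c₀ by linarith, if_pos ht]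
  ring

theorem Rmap_apply_of_mem_upper (ha : 0 < a) (hab : a < b) (h1 : b - a < c₀)
    (hN : ⌊c / b⌋ = N) (hc : c = N * b + c₀) (ht : t ∈ perSet a (Ico c₀ a)) :
    Rmap a b c t = t + N * b := by
  unfold Rmap
  rw [hN, show c - N * b = c₀ by linarith,
    if_neg ((perSet_Ico_disjoint ha (by linarith) (by linarith)).notMem_of_mem_right ht),
    if_neg ((perSet_Ico_disjoint ha le_rfl (by linarith)).notMem_of_mem_right ht)]

theorem Rtil_apply_of_mem_lower (hN : ⌊c / b⌋ = N) (ht : t ∈ perSet a (Ico (c - a) (N * b))) :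
    Rtil a b c t = t - N * b := by
  unfold Rtil
  rw [hN, sub_sub_cancel, if_pos ht]

theorem Rtil_apply_of_mem_upper (ha : 0 < a) (hab : a < b) (h2 : c₀ < a)
    (hN : ⌊c / b⌋ = N) (hc : c = N * b + c₀) (ht : t ∈ perSet a (Ico (N * b + b - a) c)) :
    Rtil a b c t = t - (N + 1) * b := by
  unfold Rtil
  rw [hN, sub_sub_cancel, show c + b - (c - N * b) - a = N * b + b - a by ring,
    if_neg ((perSet_Ico_disjoint ha (by linarith) (by linarith)).notMem_of_mem_right ht),
    if_neg ((perSet_Ico_disjoint ha le_rfl (by linarith)).notMem_of_mem_right ht)]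
  ring

end Pieces

section Windows

variable {a b c c₀ r t : ℝ} {N : ℤ} {x : ℤ → ℝ}

theorem forward_cases_of_Mrow_eq (ha : 0 < a) (hab : a < b) (h1 : b - a < c₀) (h2 : c₀ < a)
    (hN : 0 < N) (hc : c = N * b + c₀) (hx0 : x 0 = 1) (hrow : ∀ j : ℤ, Mrow a b c t x j = r) :
    (t ∈ perSet a (Ico 0 (c₀ + a - b)) ∧ x (N + 1) = 1) ∨ (t ∈ perSet a (Ico c₀ a) ∧ x N = 1) := by
  have hb : 0 < b := ha.trans hab
  obtain ⟨l, hl₀, hl₁⟩ := exists_sub_mul_mem_Ico ha t 0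
  have hrow₀ := hrow l
  have hrow₁ := hrow (l + 1)
  rcases lt_or_ge (t - l * a) (c₀ + a - b) with hs | hs
  · rw [Mrow_eq_sum_Icc x (lo := 0) (hi := N) hb ?_ ?_, sum_Icc_eq_add_sum_Icc _ hN.le] at hrow₀
    rw [Mrow_eq_sum_Icc x (lo := 0 + 1) (hi := N + 1) hb ?_ ?_,
      sum_Icc_add_one_right _ (by omega)] at hrow₁
    · exact Or.inl ⟨⟨l, hl₀, hs⟩, by linarith⟩
    all_goals push_cast; constructor <;> linarith
  rcases lt_or_ge (t - l * a) c₀ with hs' | hs'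
  · rw [Mrow_eq_sum_Icc x (lo := 0) (hi := N) hb ?_ ?_, sum_Icc_eq_add_sum_Icc _ hN.le] at hrow₀
    rw [Mrow_eq_sum_Icc x (lo := 0 + 1) (hi := N) hb ?_ ?_] at hrow₁
    · linarith
    all_goals push_cast; constructor <;> linarith
  · rw [Mrow_eq_sum_Icc x (lo := 0) (hi := N - 1) hb ?_ ?_,
      sum_Icc_eq_add_sum_Icc _ (by omega)] at hrow₀
    rw [Mrow_eq_sum_Icc x (lo := 0 + 1) (hi := N - 1 + 1) hb ?_ ?_,
      sum_Icc_add_one_right _ (by omega), sub_add_cancel] at hrow₁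
    · exact Or.inr ⟨⟨l, hs', by linarith⟩, by linarith⟩
    all_goals push_cast; constructor <;> linarith

theorem backward_cases_of_Mrow_eq (ha : 0 < a) (hab : a < b) (h1 : b - a < c₀) (h2 : c₀ < a)
    (hN : 0 < N) (hc : c = N * b + c₀) (hx0 : x 0 = 1) (hrow : ∀ j : ℤ, Mrow a b c t x j = r) :
    (t ∈ perSet a (Ico (c - a) (N * b)) ∧ x (-N) = 1) ∨
      (t ∈ perSet a (Ico (N * b + b - a) c) ∧ x (-N - 1) = 1) := by
  have hb : 0 < b := ha.trans hab
  obtain ⟨l, hl₀, hl₁⟩ := exists_sub_mul_mem_Ico ha t (c - a)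
  have hrow₀ := hrow (l - 1)
  have hrow₁ := hrow l
  rcases lt_or_ge (t - l * a) (N * b) with hs | hs
  · rw [Mrow_eq_sum_Icc x (lo := -N) (hi := -1) hb ?_ ?_,
      sum_Icc_eq_add_sum_Icc _ (by omega)] at hrow₀
    rw [Mrow_eq_sum_Icc x (lo := -N + 1) (hi := -1 + 1) hb ?_ ?_,
      sum_Icc_add_one_right _ (by omega), neg_add_cancel] at hrow₁
    · exact Or.inl ⟨⟨l, hl₀, hs⟩, by linarith⟩
    all_goals push_cast; constructor <;> linarith
  rcases lt_or_ge (t - l * a) (N * b + b - a) with hs' | hs'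
  · rw [Mrow_eq_sum_Icc x (lo := -N) (hi := -1) hb ?_ ?_] at hrow₀
    rw [Mrow_eq_sum_Icc x (lo := -N) (hi := -1 + 1) hb ?_ ?_,
      sum_Icc_add_one_right _ (by omega), neg_add_cancel] at hrow₁
    · linarith
    all_goals push_cast; constructor <;> linarith
  · rw [Mrow_eq_sum_Icc x (lo := -N - 1) (hi := -1) hb ?_ ?_,
      sum_Icc_eq_add_sum_Icc _ (by omega)] at hrow₀
    rw [Mrow_eq_sum_Icc x (lo := -N - 1 + 1) (hi := -1 + 1) hb ?_ ?_,
      sum_Icc_add_one_right _ (by omega), neg_add_cancel] at hrow₁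
    · exact Or.inr ⟨⟨l, hs', by linarith⟩, by linarith⟩
    all_goals push_cast; constructor <;> linarith

end Windows

section Maps

variable {a b c c₀ t : ℝ} {N : ℤ}

theorem binarySolSet_subset_Rmap_pieces (ha : 0 < a) (hab : a < b) (h1 : b - a < c₀)
    (h2 : c₀ < a) (hN : 0 < N) (hc : c = N * b + c₀) (r : ℝ) :
    binarySolSet a b c r ⊆ perSet a (Ico 0 (c₀ + a - b)) ∪ perSet a (Ico c₀ a) := by
  rintro t ⟨x, -, hx0, hrow⟩
  exact (forward_cases_of_Mrow_eq ha hab h1 h2 hN hc hx0 hrow).imp And.left And.left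

theorem binarySolSet_subset_Rtil_pieces (ha : 0 < a) (hab : a < b) (h1 : b - a < c₀)
    (h2 : c₀ < a) (hN : 0 < N) (hc : c = N * b + c₀) (r : ℝ) :
    binarySolSet a b c r ⊆ perSet a (Ico (c - a) (N * b)) ∪ perSet a (Ico (N * b + b - a) c) := by
  rintro t ⟨x, -, hx0, hrow⟩
  exact (backward_cases_of_Mrow_eq ha hab h1 h2 hN hc hx0 hrow).imp And.left And.left

theorem mapsTo_Rmap (ha : 0 < a) (hab : a < b) (h1 : b - a < c₀) (h2 : c₀ < a) (hN₀ : 0 < N)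
    (hN : ⌊c / b⌋ = N) (hc : c = N * b + c₀) (r : ℝ) :
    MapsTo (Rmap a b c) (binarySolSet a b c r) (binarySolSet a b c r) := by
  rintro t ⟨x, hbin, hx0, hrow⟩
  rcases forward_cases_of_Mrow_eq ha hab h1 h2 hN₀ hc hx0 hrow with ⟨ht, hx⟩ | ⟨ht, hx⟩
  · rw [Rmap_apply_of_mem_lower hN hc ht]
    exact_mod_cast add_mul_mem_binarySolSet hbin hrow hx
  · rw [Rmap_apply_of_mem_upper ha hab h1 hN hc ht]
    exact add_mul_mem_binarySolSet hbin hrow hx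

theorem mapsTo_Rtil (ha : 0 < a) (hab : a < b) (h1 : b - a < c₀) (h2 : c₀ < a) (hN₀ : 0 < N)
    (hN : ⌊c / b⌋ = N) (hc : c = N * b + c₀) (r : ℝ) :
    MapsTo (Rtil a b c) (binarySolSet a b c r) (binarySolSet a b c r) := by
  rintro t ⟨x, hbin, hx0, hrow⟩
  rcases backward_cases_of_Mrow_eq ha hab h1 h2 hN₀ hc hx0 hrow with ⟨ht, hx⟩ | ⟨ht, hx⟩
  · rw [Rtil_apply_of_mem_lower hN ht]
    convert add_mul_mem_binarySolSet hbin hrow hx using 1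
    push_cast
    ring
  · rw [Rtil_apply_of_mem_upper ha hab h2 hN hc ht]
    convert add_mul_mem_binarySolSet hbin hrow hx using 1
    push_cast
    ring

theorem Rtil_Rmap_of_mem (ha : 0 < a) (hab : a < b) (h1 : b - a < c₀) (h2 : c₀ < a)
    (hN : ⌊c / b⌋ = N) (hc : c = N * b + c₀)
    (ht : t ∈ perSet a (Ico 0 (c₀ + a - b)) ∪ perSet a (Ico c₀ a)) :
    Rtil a b c (Rmap a b c t) = t := by
  rcases ht with ht | ht
  · obtain ⟨k, hk₀, hk₁⟩ := ht
    rw [Rmap_apply_of_mem_lower hN hc ⟨k, hk₀, hk₁⟩, Rtil_apply_of_mem_upper ha hab h2 hN hc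
      ⟨k + 1, by push_cast; constructor <;> linarith⟩]
    ring
  · obtain ⟨k, hk₀, hk₁⟩ := ht
    rw [Rmap_apply_of_mem_upper ha hab h1 hN hc ⟨k, hk₀, hk₁⟩, Rtil_apply_of_mem_lower hN
      ⟨k + 1, by push_cast; constructor <;> linarith⟩]
    ring

theorem Rmap_Rtil_of_mem (ha : 0 < a) (hab : a < b) (h1 : b - a < c₀) (h2 : c₀ < a)
    (hN : ⌊c / b⌋ = N) (hc : c = N * b + c₀)
    (ht : t ∈ perSet a (Ico (c - a) (N * b)) ∪ perSet a (Ico (N * b + b - a) c)) :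
    Rmap a b c (Rtil a b c t) = t := by
  rcases ht with ht | ht
  · obtain ⟨k, hk₀, hk₁⟩ := ht
    rw [Rtil_apply_of_mem_lower hN ⟨k, hk₀, hk₁⟩, Rmap_apply_of_mem_upper ha hab h1 hN hc
      ⟨k - 1, by push_cast; constructor <;> linarith⟩]
    ring
  · obtain ⟨k, hk₀, hk₁⟩ := ht
    rw [Rtil_apply_of_mem_upper ha hab h2 hN hc ⟨k, hk₀, hk₁⟩, Rmap_apply_of_mem_lower hN hc
      ⟨k - 1, by push_cast; constructor <;> linarith⟩]
    ring

end Maps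

theorem volume_image_eq_of_eqOn_add {f : ℝ → ℝ} {A : Set ℝ} {d : ℝ} (h : EqOn f (· + d) A) :
    volume (f '' A) = volume A := by
  rw [h.image_eq, image_add_right, measure_preimage_add_right]

theorem volume_image_eq_of_injOn_of_eq_add {f : ℝ → ℝ} {E P Q : Set ℝ} {d d' : ℝ}
    (hE : MeasurableSet E) (hP : MeasurableSet P) (hf : InjOn f E) (hEPQ : E ⊆ P ∪ Q)
    (hfP : ∀ t ∈ P, f t = t + d) (hfQ : ∀ t ∈ Q, f t = t + d') :
    volume (f '' E) = volume E := by
  have hEP : EqOn f (· + d) (E ∩ P) := fun t ht => hfP t ht.2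
  have hEQ : EqOn f (· + d') (E \ P) := fun t ht => hfQ t ((hEPQ ht.1).resolve_left ht.2)
  have hm : MeasurableSet (f '' (E ∩ P)) :=
    hEP.image_eq ▸ (measurableEmbedding_addRight d).measurableSet_image.2 (hE.inter hP)
  calc volume (f '' E)
      = volume (f '' (E ∩ P)) + volume (f '' (E \ P)) := by
        rw [hf.image_sdiff, ← measure_inter_add_sdiff _ hm,
          inter_eq_right.2 (image_mono inter_subset_left)]
    _ = volume (E ∩ P) + volume (E \ P) := by
        rw [volume_image_eq_of_eqOn_add hEP, volume_image_eq_of_eqOn_add hEQ]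
    _ = volume E := measure_inter_add_sdiff E hP

/-- Proposition `rabcbasic1`: with `c₀ = c − ⌊c/b⌋·b` and `b − a < c₀ < a`:
(i) `R_{a,b,c}` and `R̃_{a,b,c}` map `D_{a,b,c}` and `S_{a,b,c}` onto themselves;
(ii) on `S_{a,b,c}` (hence on `D_{a,b,c}`) they are mutually inverse;
(iii) on measurable subsets of `S_{a,b,c}` (hence of `D_{a,b,c}`) they preserve
Lebesgue measure. -/
theorem R_Rtil_invariance_inverse_measure_preserving (a b c c₀ : ℝ)
    (ha : 0 < a) (hab : a < b) (hbc : b < c)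
    (hc0 : c₀ = c - (⌊c / b⌋ : ℝ) * b) (h1 : b - a < c₀) (h2 : c₀ < a) :
    (Rmap a b c '' Dset a b c = Dset a b c ∧ Rtil a b c '' Dset a b c = Dset a b c ∧
      Rmap a b c '' Sset a b c = Sset a b c ∧ Rtil a b c '' Sset a b c = Sset a b c) ∧
    (∀ t ∈ Sset a b c, Rmap a b c (Rtil a b c t) = t ∧ Rtil a b c (Rmap a b c t) = t) ∧
    (∀ E : Set ℝ, E ⊆ Sset a b c → MeasurableSet E →
      volume (Rmap a b c '' E) = volume E ∧ volume (Rtil a b c '' E) = volume E) := by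
  obtain ⟨N, hN⟩ : ∃ N : ℤ, ⌊c / b⌋ = N := ⟨_, rfl⟩
  have hN₀ : 0 < N := hN ▸ Int.floor_pos.2 ((one_le_div (ha.trans hab)).2 hbc.le)
  have hc : c = N * b + c₀ := by rw [hc0, hN]; ring
  have hsub := binarySolSet_subset_Rmap_pieces ha hab h1 h2 hN₀ hc
  have hsub' := binarySolSet_subset_Rtil_pieces ha hab h1 h2 hN₀ hc
  have hinv (r : ℝ) :
      InvOn (Rtil a b c) (Rmap a b c) (binarySolSet a b c r) (binarySolSet a b c r) :=
    ⟨fun t ht => Rtil_Rmap_of_mem ha hab h1 h2 hN hc (hsub r ht),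
      fun t ht => Rmap_Rtil_of_mem ha hab h1 h2 hN hc (hsub' r ht)⟩
  have hmaps := mapsTo_Rmap ha hab h1 h2 hN₀ hN hc
  have hmaps' := mapsTo_Rtil ha hab h1 h2 hN₀ hN hc
  have hbij (r : ℝ) := (hinv r).bijOn (hmaps r) (hmaps' r)
  have hbij' (r : ℝ) := (hinv r).symm.bijOn (hmaps' r) (hmaps r)
  refine ⟨⟨(hbij 2).image_eq, (hbij' 2).image_eq, (hbij 1).image_eq, (hbij' 1).image_eq⟩,
    fun t ht => ⟨(hinv 1).2 ht, (hinv 1).1 ht⟩, fun E hES hE => ⟨?_, ?_⟩⟩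
  · exact volume_image_eq_of_injOn_of_eq_add hE (measurableSet_perSet a measurableSet_Ico)
      ((hbij 1).injOn.mono hES) (hES.trans (hsub 1))
      (fun _ ht => Rmap_apply_of_mem_lower hN hc ht)
      (fun _ ht => Rmap_apply_of_mem_upper ha hab h1 hN hc ht)
  · exact volume_image_eq_of_injOn_of_eq_add hE (measurableSet_perSet a measurableSet_Ico)
      ((hbij' 1).injOn.mono hES) (hES.trans (hsub' 1))
      (fun _ ht => by rw [Rtil_apply_of_mem_lower hN ht, sub_eq_add_neg])
      (fun _ ht => by rw [Rtil_apply_of_mem_upper ha hab h2 hN hc ht, sub_eq_add_neg])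
end

section
/- Let (a,b,c) be a triple of positive real numbers with a < b < c and b − a < c₀ < a, where c₀ := c − ⌊c/b⌋·b. Then for every t ∈ S_{a,b,c} there exists exactly one vector x ∈ B_b⁰ such that M_{a,b,c}(t)x = 1. -/
open MeasureTheory Set

/-!
A binary solution `x` is determined by its support `K = {k | x k = 1}`, and `M(t)x = 1` says
that every row `j` is hit by exactly one `k ∈ K`. Row `j` is hit by `k` exactly when
`⌊(t - c + kb)/a⌋ < j ≤ ⌊(t + kb)/a⌋`, and since `a ≤ b` both endpoints are strictly increasing
in `k`. Hence for consecutive elements `m < n` of `K` the row intervals must abut,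
`⌊(t + mb)/a⌋ = ⌊(t - c + nb)/a⌋`, and by strict monotonicity each of `m`, `n` determines the
other. Starting from `0 ∈ K`, the support is therefore forced upwards, and, after reflecting `ℤ`,
downwards.
-/

open scoped Pointwise

theorem tsum_eq_one_iff_existsUnique {ι : Type*} {f : ι → ℝ} (hf : ∀ i, f i = 0 ∨ f i = 1) :
    ∑' i, f i = 1 ↔ ∃! i, f i = 1 := by
  classical
  constructor
  · intro hsum
    have hs : Summable f := by
      by_contra h
      rw [tsum_eq_zero_of_not_summable h] at hsum
      norm_num at hsum
    obtain ⟨i, hi⟩ : ∃ i, f i = 1 := by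
      by_contra! h
      have hf0 : f = 0 := funext fun i => (hf i).resolve_right (h i)
      simp [hf0] at hsum
    refine ⟨i, hi, fun i' hi' => by_contra fun hne => ?_⟩
    have h2 := hs.sum_le_tsum {i', i}
      (fun k _ => (hf k).elim (fun h => h.ge) (fun h => h ▸ zero_le_one))
    rw [Finset.sum_pair hne, hi, hi', hsum] at h2
    norm_num at h2
  · rintro ⟨i, hi, huniq⟩
    rw [tsum_eq_single i fun i' hne => (hf i').resolve_right (hne ∘ huniq i'), hi]

section Mrow

variable {a b c t : ℝ}

theorem chiIco_mul_eq_zero_or_one {y z : ℝ} (hz : z = 0 ∨ z = 1) :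
    chiIco c y * z = 0 ∨ chiIco c y * z = 1 := by
  unfold chiIco
  rcases hz with rfl | rfl <;> split_ifs <;> simp

theorem chiIco_mul_eq_one_iff {y z : ℝ} (hz : z = 0 ∨ z = 1) :
    chiIco c y * z = 1 ↔ z = 1 ∧ y ∈ Ico 0 c := by
  unfold chiIco
  rcases hz with rfl | rfl <;> split_ifs with h <;> simp [h]

theorem Mrow_eq_one_iff {x : ℤ → ℝ} (hx : ∀ k, x k = 0 ∨ x k = 1) (j : ℤ) :
    Mrow a b c t x j = 1 ↔ ∃! k, x k = 1 ∧ t - j * a + k * b ∈ Ico 0 c := by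
  unfold Mrow
  rw [tsum_eq_one_iff_existsUnique fun k => chiIco_mul_eq_zero_or_one (hx k)]
  simp only [chiIco_mul_eq_one_iff (hx _)]

theorem mem_Ico_iff_mem_Ioc_floor (ha : 0 < a) (j k : ℤ) :
    t - j * a + k * b ∈ Ico 0 c ↔ j ∈ Ioc ⌊(t - c + k * b) / a⌋ ⌊(t + k * b) / a⌋ := by
  simp only [mem_Ico, mem_Ioc, Int.floor_lt, Int.le_floor, div_lt_iff₀ ha, le_div_iff₀ ha]
  constructor <;> rintro ⟨h₁, h₂⟩ <;> constructor <;> linarith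

theorem strictMono_floor_add_mul_div (ha : 0 < a) (hab : a ≤ b) (s : ℝ) :
    StrictMono fun k : ℤ => ⌊(s + k * b) / a⌋ := by
  intro m n hmn
  have hstep : (s + m * b) / a + 1 ≤ (s + n * b) / a := by
    rw [div_add_one ha.ne', div_le_div_iff_of_pos_right ha]
    have : (m : ℝ) + 1 ≤ n := by exact_mod_cast hmn
    nlinarith
  rw [Int.lt_iff_add_one_le, Int.le_floor]
  push_cast
  linarith [Int.floor_le ((s + m * b) / a)]

end Mrow


def IsIocPartition (g h : ℤ → ℤ) (K : Set ℤ) : Prop :=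
  ∀ j : ℤ, ∃! k, k ∈ K ∧ j ∈ Ioc (h k) (g k)

namespace IsIocPartition

variable {g h : ℤ → ℤ} {K L : Set ℤ}

theorem exists_gt (hK : IsIocPartition g h K) (hg : Monotone g) (m : ℤ) : ∃ n ∈ K, m < n := by
  obtain ⟨n, ⟨hn, -, hle⟩, -⟩ := hK (g m + 1)
  exact ⟨n, hn, hg.reflect_lt (by omega)⟩

theorem eq_of_consecutive (hK : IsIocPartition g h K) (hg : Monotone g) (hh : StrictMono h)
    {m n : ℤ} (hm : m ∈ K) (hn : n ∈ K) (hmn : m < n) (hgap : ∀ k ∈ K, m < k → n ≤ k) :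
    g m = h n := by
  rcases lt_trichotomy (g m) (h n) with hlt | heq | hgt
  · obtain ⟨k, ⟨hk, hhk, hgk⟩, -⟩ := hK (h n)
    have hnk := hgap k hk (hg.reflect_lt (hlt.trans_le hgk))
    exact absurd hhk (not_lt.2 (hh.monotone hnk))
  · exact heq
  · obtain ⟨k, -, huniq⟩ := hK (g m)
    have := (huniq m ⟨hm, (hh hmn).trans hgt, le_rfl⟩).trans
      (huniq n ⟨hn, hgt, hg hmn.le⟩).symm
    omega

theorem mem_of_le (hK : IsIocPartition g h K) (hL : IsIocPartition g h L) (hg : Monotone g)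
    (hh : StrictMono h) {k₀ k : ℤ} (hK₀ : k₀ ∈ K) (hL₀ : k₀ ∈ L) (hk : k ∈ K) (hle : k₀ ≤ k) :
    k ∈ L := by
  classical
  by_contra hkL
  obtain ⟨i, ⟨hiK, hk₀i, hiL⟩, hmin⟩ := Int.exists_least_of_bdd
    (P := fun i => i ∈ K ∧ k₀ ≤ i ∧ i ∉ L) ⟨k₀, fun _ hi => hi.2.1⟩ ⟨k, hk, hle, hkL⟩
  have hk₀i : k₀ < i := lt_of_le_of_ne hk₀i (by rintro rfl; exact hiL hL₀)
  obtain ⟨m, ⟨hmK, hmi⟩, hmax⟩ := Int.exists_greatest_of_bdd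
    (P := fun m => m ∈ K ∧ m < i) ⟨i, fun _ hm => hm.2.le⟩ ⟨k₀, hK₀, hk₀i⟩
  have hmL : m ∈ L := by
    by_contra hmL
    exact (hmin m ⟨hmK, hmax k₀ ⟨hK₀, hk₀i⟩, hmL⟩).not_gt hmi
  obtain ⟨n, ⟨hnL, hmn⟩, hnmin⟩ := Int.exists_least_of_bdd
    (P := fun n => n ∈ L ∧ m < n) ⟨m, fun _ hn => hn.2.le⟩ (hL.exists_gt hg m)
  have hgapK : ∀ k ∈ K, m < k → i ≤ k := fun k hk hmk =>
    not_lt.1 fun hki => (hmax k ⟨hk, hki⟩).not_gt hmk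
  have hin : h n = h i :=
    (hL.eq_of_consecutive hg hh hmL hnL hmn fun k hk hmk => hnmin k ⟨hk, hmk⟩).symm.trans
      (hK.eq_of_consecutive hg hh hmK hiK hmi hgapK)
  exact hiL (hh.injective hin ▸ hnL)

theorem neg (hK : IsIocPartition g h K) :
    IsIocPartition (fun k => -h (-k) - 1) (fun k => -g (-k) - 1) (-K) := by
  intro j
  obtain ⟨k, ⟨hk, hj⟩, huniq⟩ := hK (-j)
  refine ⟨-k, ⟨by simpa using hk, ?_⟩, fun k' ⟨hk', hj'⟩ => ?_⟩
  · simp only [neg_neg, mem_Ioc] at hj ⊢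
    omega
  · have := huniq (-k') ⟨hk', by simp only [mem_Ioc] at hj' ⊢; omega⟩
    omega

theorem subset (hK : IsIocPartition g h K) (hL : IsIocPartition g h L) (hg : StrictMono g)
    (hh : StrictMono h) {k₀ : ℤ} (hK₀ : k₀ ∈ K) (hL₀ : k₀ ∈ L) : K ⊆ L := by
  intro k hk
  rcases le_total k₀ k with hle | hle
  · exact hK.mem_of_le hL hg.monotone hh hK₀ hL₀ hk hle
  · have hg' : Monotone fun k => -h (-k) - 1 := fun m n hmn => by
      dsimp only
      have := hh.monotone (neg_le_neg hmn)
      omega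
    have hh' : StrictMono fun k => -g (-k) - 1 := fun m n hmn => by
      dsimp only
      have := hg (neg_lt_neg hmn)
      omega
    simpa using hK.neg.mem_of_le hL.neg hg' hh' (Set.neg_mem_neg.2 hK₀)
      (Set.neg_mem_neg.2 hL₀) (Set.neg_mem_neg.2 hk) (neg_le_neg hle)

end IsIocPartition

theorem isIocPartition_setOf_eq_one {a b c t : ℝ} (ha : 0 < a) {x : ℤ → ℝ}
    (hx : ∀ k, x k = 0 ∨ x k = 1) (hM : ∀ j, Mrow a b c t x j = 1) :
    IsIocPartition (fun k => ⌊(t + k * b) / a⌋) (fun k => ⌊(t - c + k * b) / a⌋)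
      {k | x k = 1} := by
  intro j
  simpa only [Set.mem_ofPred_eq, mem_Ico_iff_mem_Ioc_floor ha] using (Mrow_eq_one_iff hx j).1 (hM j)

theorem eq_of_setOf_eq_one_eq {ι : Type*} {x y : ι → ℝ} (hx : ∀ k, x k = 0 ∨ x k = 1)
    (hy : ∀ k, y k = 0 ∨ y k = 1) (hxy : {k | x k = 1} = {k | y k = 1}) : x = y := by
  funext k
  have hk : x k = 1 ↔ y k = 1 := Set.ext_iff.1 hxy k
  rcases hx k with h₀ | h₀ <;> rcases hy k with h₁ | h₁ <;> simp_all

theorem unique_binary_solution_general (a b c : ℝ)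
    (ha : 0 < a) (hab : a < b) :
    ∀ t ∈ Sset a b c,
      ∃! x : ℤ → ℝ,
        (∀ k, x k = 0 ∨ x k = 1) ∧ x 0 = 1 ∧ ∀ j : ℤ, Mrow a b c t x j = 1 := by
  rintro t ⟨x, hx⟩
  refine ⟨x, hx, fun y hy => ?_⟩
  have hg := strictMono_floor_add_mul_div ha hab.le t
  have hh := strictMono_floor_add_mul_div ha hab.le (t - c)
  have hxP := isIocPartition_setOf_eq_one ha hx.1 hx.2.2
  have hyP := isIocPartition_setOf_eq_one ha hy.1 hy.2.2
  exact eq_of_setOf_eq_one_eq hy.1 hx.1 <| (hyP.subset hxP hg hh hy.2.1 hx.2.1).antisymm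
    (hxP.subset hyP hg hh hx.2.1 hy.2.1)

/-- Proposition `uniqueness`: with `c₀ = c − ⌊c/b⌋·b` and `b − a < c₀ < a`, for every
`t ∈ S_{a,b,c}` there is a unique binary vector `x` with `x(0) = 1` and `M_{a,b,c}(t)x = 1`. -/
theorem unique_binary_solution (a b c c₀ : ℝ)
    (ha : 0 < a) (hab : a < b) (hbc : b < c)
    (hc0 : c₀ = c - (⌊c / b⌋ : ℝ) * b) (h1 : b - a < c₀) (h2 : c₀ < a) :
    ∀ t ∈ Sset a b c,
      ∃! x : ℤ → ℝ,
        (∀ k, x k = 0 ∨ x k = 1) ∧ x 0 = 1 ∧ ∀ j : ℤ, Mrow a b c t x j = 1 :=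
  unique_binary_solution_general a b c ha hab
end

section
/- Let (a,b,c) be a triple of positive real numbers with a < b < c, b − a < c₀ < a, and a/b ∉ ℚ, where c₀ := c − ⌊c/b⌋·b. Then: (i) if S_{a,b,c} ≠ ∅, then for every ε > 0 both (0, ε) ∩ S_{a,b,c} ≠ ∅ and (−ε, 0) ∩ S_{a,b,c} ≠ ∅; (ii) if D_{a,b,c} ≠ ∅, then for every ε > 0 both (0, ε) ∩ D_{a,b,c} ≠ ∅ and (−ε, 0) ∩ D_{a,b,c} ≠ ∅. -/
open MeasureTheory Set

/-! The points of `Sset a b c` and `Dset a b c` in `[0, a)` are carried into each other by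
`T s = s + ⌈(c - s)/b⌉ b (mod a)`: the rows `μ = a` and `μ = 0` of `M_{a,b,c}(s) x` agree, and
their difference shows that `x(k) = 1` for the `k` with `k b ∈ [c - s, c - s + a)`. Since `a/b` is
irrational, a `T`-orbit never repeats, so two of its points are at a distance `0 < |d| < ε` that is
also less than `b - a`. Two such points use the same multiple of `b`, so `T` keeps their difference
equal to `d` modulo `a`; it cannot stay equal to `d` forever, as the orbit would then drift out of
`[0, a)`. At the first wrap-around one orbit point lies in `(0, |d|)` and another in
`(a - |d|, a)`. -/

lemma chiIco_eq_zero_iff {c v : ℝ} : chiIco c v = 0 ↔ ¬(0 ≤ v ∧ v < c) := by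
  unfold chiIco
  split_ifs with h <;> simp [h]

lemma chiIco_sub_add_chiIco {a c : ℝ} (ha : 0 ≤ a) (hc : 0 ≤ c) (v : ℝ) :
    chiIco c (v - a) + chiIco a v = chiIco c v + chiIco a (v - c) := by
  unfold chiIco
  split_ifs <;> grind

lemma summable_chiIco_mul {b : ℝ} (hb : 0 < b) (C T : ℝ) (x : ℤ → ℝ) :
    Summable fun k : ℤ => chiIco C (T + k * b) * x k := by
  refine summable_of_ne_finset_zero (s := Finset.Icc ⌈-T / b⌉ ⌊(C - T) / b⌋) fun k hk => ?_
  rw [chiIco_eq_zero_iff.2, zero_mul]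
  rintro ⟨h0, hC⟩
  refine hk (Finset.mem_Icc.2 ⟨Int.ceil_le.2 ?_, Int.le_floor.2 ?_⟩)
  · rw [div_le_iff₀ hb]; linarith
  · rw [le_div_iff₀ hb]; linarith

lemma Mrow_one_add_tsum {a b c : ℝ} (ha : 0 ≤ a) (hb : 0 < b) (hc : 0 ≤ c) (t : ℝ)
    (x : ℤ → ℝ) :
    Mrow a b c t x 1 + ∑' k : ℤ, chiIco a (t + k * b) * x k =
      Mrow a b c t x 0 + ∑' k : ℤ, chiIco a (t - c + k * b) * x k := by
  unfold Mrow
  rw [← (summable_chiIco_mul hb _ _ x).tsum_add (summable_chiIco_mul hb _ _ x),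
    ← (summable_chiIco_mul hb _ _ x).tsum_add (summable_chiIco_mul hb _ _ x)]
  refine tsum_congr fun k => ?_
  have h := chiIco_sub_add_chiIco ha hc (t + k * b)
  simp only [Int.cast_one, Int.cast_zero, one_mul, zero_mul, sub_zero]
  rw [show t - a + k * b = t + k * b - a by ring, show t - c + k * b = t + k * b - c by ring]
  linear_combination x k * h

lemma tsum_chiIco_add_mul {a b s : ℝ} (hab : a < b) (hs : s ∈ Ico 0 a) (x : ℤ → ℝ) :
    ∑' k : ℤ, chiIco a (s + k * b) * x k = x 0 := by
  rw [tsum_eq_single 0 fun k hk => ?_]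
  · simp [chiIco, hs.1, hs.2]
  · rw [chiIco_eq_zero_iff.2, zero_mul]
    rintro ⟨h0, hlt⟩
    rcases hk.lt_or_gt with hk | hk
    · have : (k : ℝ) ≤ -1 := by exact_mod_cast Int.le_sub_one_of_lt hk
      nlinarith [hs.2]
    · have : (1 : ℝ) ≤ k := by exact_mod_cast hk
      nlinarith [hs.1]

/-- `Sset a b c = solSet a b c 1` and `Dset a b c = solSet a b c 2`. -/
def solSet (a b c r : ℝ) : Set ℝ :=
  {t | ∃ x : ℤ → ℝ, (∀ k, x k = 0 ∨ x k = 1) ∧ x 0 = 1 ∧ ∀ j : ℤ, Mrow a b c t x j = r}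

section solSet

variable {a b c r : ℝ}

lemma add_int_mul_mem_solSet {t : ℝ} (ht : t ∈ solSet a b c r) (n : ℤ) :
    t + n * a ∈ solSet a b c r := by
  obtain ⟨x, hx, hx0, hrow⟩ := ht
  refine ⟨x, hx, hx0, fun j => ?_⟩
  rw [← hrow (j - n)]
  refine tsum_congr fun k => ?_
  push_cast
  ring_nf

lemma toIcoMod_mem_solSet (ha : 0 < a) {t : ℝ} (ht : t ∈ solSet a b c r) :
    toIcoMod ha 0 t ∈ solSet a b c r := by
  rw [← self_sub_toIcoDiv_zsmul, zsmul_eq_mul, sub_eq_add_neg, ← neg_mul, ← Int.cast_neg]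
  exact add_int_mul_mem_solSet ht _

lemma nonempty_Ioo_inter_solSet_of_mem {ε X Y : ℝ} (hX : X ∈ solSet a b c r)
    (hY : Y ∈ solSet a b c r) (hX' : X ∈ Ioo 0 ε) (hY₁ : a - ε < Y) (hY₂ : Y < a) :
    (Ioo 0 ε ∩ solSet a b c r).Nonempty ∧ (Ioo (-ε) 0 ∩ solSet a b c r).Nonempty := by
  refine ⟨⟨X, hX', hX⟩, ⟨Y - a, ⟨by linarith, by linarith⟩, ?_⟩⟩
  simpa [sub_eq_add_neg] using add_int_mul_mem_solSet hY (-1)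

lemma add_int_mul_mem_solSet_of_eq_one {t : ℝ} {x : ℤ → ℝ} (hx : ∀ k, x k = 0 ∨ x k = 1)
    (hrow : ∀ j, Mrow a b c t x j = r) {k₀ : ℤ} (hk₀ : x k₀ = 1) :
    t + k₀ * b ∈ solSet a b c r := by
  refine ⟨fun k => x (k + k₀), fun k => hx _, by simpa using hk₀, fun j => ?_⟩
  rw [← hrow j]
  unfold Mrow
  rw [← (Equiv.addRight k₀).tsum_eq
    fun k : ℤ => chiIco c (t - j * a + k * b) * x k]
  refine tsum_congr fun k => ?_
  simp only [Equiv.coe_addRight, Int.cast_add]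
  ring_nf

/-- The rows `μ = a` and `μ = 0` of `M_{a,b,c}(s) x` agree; their difference is
`Σ_k χ_{[0,a)}(s - c + k b) x(k) - x(0)`. -/
lemma exists_eq_one_of_mem_Ico (hab : a < b) (hc : 0 ≤ c) {s : ℝ} {x : ℤ → ℝ}
    (hx : ∀ k, x k = 0 ∨ x k = 1) (hx0 : x 0 = 1) (hrow : ∀ j, Mrow a b c s x j = r)
    (hs : s ∈ Ico 0 a) : ∃ k : ℤ, x k = 1 ∧ c - s ≤ k * b ∧ k * b < c - s + a := by
  have ha : 0 < a := hs.1.trans_lt hs.2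
  have hsum : ∑' k : ℤ, chiIco a (s - c + k * b) * x k = 1 := by
    have h := Mrow_one_add_tsum ha.le (ha.trans hab) hc s x
    rw [hrow, hrow, tsum_chiIco_add_mul hab hs, hx0] at h
    linarith
  obtain ⟨k, hk⟩ : ∃ k : ℤ, chiIco a (s - c + k * b) * x k ≠ 0 := by
    by_contra! h
    simp [h] at hsum
  have hchi := left_ne_zero_of_mul hk
  rw [Ne, chiIco_eq_zero_iff, not_not] at hchi
  exact ⟨k, (hx k).resolve_left (right_ne_zero_of_mul hk), by linarith, by linarith⟩

lemma ceil_eq_of_le_of_lt (hab : a < b) (hb : 0 < b) {s : ℝ} {k : ℤ} (h₁ : c - s ≤ k * b)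
    (h₂ : k * b < c - s + a) : ⌈(c - s) / b⌉ = k := by
  rw [Int.ceil_eq_iff, lt_div_iff₀ hb, div_le_iff₀ hb]
  constructor <;> nlinarith

lemma add_ceil_mul_mem_solSet (hab : a < b) (hc : 0 ≤ c) {s : ℝ}
    (hs : s ∈ solSet a b c r) (hs' : s ∈ Ico 0 a) :
    s + ⌈(c - s) / b⌉ * b ∈ solSet a b c r ∧ ⌈(c - s) / b⌉ * b < c - s + a := by
  obtain ⟨x, hx, hx0, hrow⟩ := hs
  obtain ⟨k, hxk, h₁, h₂⟩ := exists_eq_one_of_mem_Ico hab hc hx hx0 hrow hs'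
  rw [ceil_eq_of_le_of_lt hab ((hs'.1.trans_lt hs'.2).trans hab) h₁ h₂]
  exact ⟨add_int_mul_mem_solSet_of_eq_one hx hrow hxk, h₂⟩

end solSet

lemma Irrational.eq_zero_of_int_mul_eq_int_mul {a b : ℝ} (hirr : Irrational (a / b)) (hb : b ≠ 0)
    {B C : ℤ} (h : B * b = C * a) : B = 0 := by
  rcases eq_or_ne C 0 with rfl | hC
  · simpa [hb] using h
  · refine absurd ?_ ((hirr.mul_intCast hC).ne_int B)
    field_simp
    linarith

lemma IsCompact.exists_lt_dist_lt {X : Type*} [PseudoMetricSpace X] {s : Set X}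
    (hs : IsCompact s) {u : ℕ → X} (hu : ∀ n, u n ∈ s) {δ : ℝ} (hδ : 0 < δ) :
    ∃ m n, m < n ∧ dist (u n) (u m) < δ := by
  obtain ⟨L, -, φ, hφ, hlim⟩ := hs.tendsto_subseq hu
  obtain ⟨N, hN⟩ := Metric.cauchySeq_iff'.1 (Filter.Tendsto.cauchySeq hlim) δ hδ
  exact ⟨φ N, φ (N + 1), hφ N.lt_succ_self, hN (N + 1) N.le_succ⟩

lemma eq_zero_of_forall_add_eq_add {u : ℕ → ℝ} {a d : ℝ} {m n : ℕ} (hmn : m < n)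
    (hu : ∀ i, u i ∈ Icc 0 a) (hshift : ∀ i, u (n + i) = u (m + i) + d) : d = 0 := by
  obtain ⟨p, rfl⟩ := Nat.exists_eq_add_of_lt hmn
  have hdrift : ∀ k : ℕ, u (m + k * (p + 1)) = u m + k * d := by
    intro k
    induction k with
    | zero => simp
    | succ k ih =>
      rw [show m + (k + 1) * (p + 1) = m + p + 1 + k * (p + 1) by ring, hshift, ih]
      push_cast
      ring
  by_contra hd
  obtain ⟨k, hk⟩ := exists_nat_gt (a / |d|)
  rw [div_lt_iff₀ (abs_pos.2 hd)] at hk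
  have hbound : |(k : ℝ) * d| ≤ a := by
    have h₁ := hu m
    have h₂ := hu (m + k * (p + 1))
    rw [hdrift] at h₂
    exact abs_le.2 ⟨by linarith [h₁.2, h₂.1], by linarith [h₁.1, h₂.2]⟩
  rw [abs_mul, Nat.abs_cast] at hbound
  linarith

lemma lt_abs_and_sub_abs_lt_of_sub_eq {a d X Y : ℝ} {M : ℤ} (hX : X ∈ Ioo 0 a)
    (hY : Y ∈ Ioo 0 a) (hd : |d| < a) (hM : M ≠ 0) (h : Y - X = d + M * a) :
    (X < |d| ∧ a - |d| < Y) ∨ (Y < |d| ∧ a - |d| < X) := by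
  obtain ⟨hX₀, hXa⟩ := hX
  obtain ⟨hY₀, hYa⟩ := hY
  rw [abs_lt] at hd
  obtain hM | rfl | rfl | hM : M ≤ -2 ∨ M = -1 ∨ M = 1 ∨ 2 ≤ M := by omega
  · have : (M : ℝ) ≤ -2 := by exact_mod_cast hM
    nlinarith
  · have hd₀ : 0 < d := by push_cast at h; linarith
    right
    rw [abs_of_pos hd₀]
    push_cast at h
    constructor <;> linarith
  · have hd₀ : d < 0 := by push_cast at h; linarith
    left
    rw [abs_of_neg hd₀]
    push_cast at h
    constructor <;> linarith
  · have : (2 : ℝ) ≤ M := by exact_mod_cast hM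
    nlinarith

noncomputable def nextPoint {a : ℝ} (ha : 0 < a) (b c s : ℝ) : ℝ :=
  toIcoMod ha 0 (s + ⌈(c - s) / b⌉ * b)

section nextPoint

variable {a b c r : ℝ} (ha : 0 < a)

lemma nextPoint_mem_Ico (s : ℝ) : nextPoint ha b c s ∈ Ico 0 a := by
  simpa [nextPoint] using toIcoMod_mem_Ico ha 0 (s + ⌈(c - s) / b⌉ * b)

lemma exists_nextPoint_eq (s : ℝ) :
    ∃ M : ℤ, nextPoint ha b c s = s + ⌈(c - s) / b⌉ * b - M * a :=
  ⟨toIcoDiv ha 0 _, by rw [nextPoint, ← self_sub_toIcoDiv_zsmul, zsmul_eq_mul]⟩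

lemma exists_nextPoint_sub (hb : 0 < b) {s : ℝ} (hs : s < c) :
    ∃ B C : ℤ, 0 < B ∧ nextPoint ha b c s - s = B * b - C * a := by
  obtain ⟨M, hM⟩ := exists_nextPoint_eq ha s
  exact ⟨_, M, Int.ceil_pos.2 (div_pos (sub_pos.2 hs) hb), by rw [hM]; ring⟩

variable (hab : a < b) (hc : 0 ≤ c)
include hab hc

lemma nextPoint_mem_solSet {s : ℝ} (hs : s ∈ solSet a b c r) (hs' : s ∈ Ico 0 a) :
    nextPoint ha b c s ∈ solSet a b c r :=
  toIcoMod_mem_solSet ha (add_ceil_mul_mem_solSet hab hc hs hs').1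

lemma exists_nextPoint_sub_nextPoint {x y : ℝ} (hx : x ∈ solSet a b c r) (hx' : x ∈ Ico 0 a)
    (hy : y ∈ solSet a b c r) (hy' : y ∈ Ico 0 a) (hxy : |y - x| < b - a) :
    ∃ M : ℤ, nextPoint ha b c y - nextPoint ha b c x = y - x + M * a := by
  have hb : 0 < b := ha.trans hab
  -- both multiples of `b` lie in `[c - x, c - x + a) ∪ [c - y, c - y + a)`, shorter than `b`
  have hk : ⌈(c - x) / b⌉ = ⌈(c - y) / b⌉ := by
    have hx₁ := (div_le_iff₀ hb).1 (Int.le_ceil ((c - x) / b))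
    have hy₁ := (div_le_iff₀ hb).1 (Int.le_ceil ((c - y) / b))
    have hx₂ := (add_ceil_mul_mem_solSet hab hc hx hx').2
    have hy₂ := (add_ceil_mul_mem_solSet hab hc hy hy').2
    rw [abs_lt] at hxy
    have h₁ : ((⌈(c - x) / b⌉ - ⌈(c - y) / b⌉ : ℤ) : ℝ) * b < 1 * b := by push_cast; linarith
    have h₂ : ((⌈(c - y) / b⌉ - ⌈(c - x) / b⌉ : ℤ) : ℝ) * b < 1 * b := by push_cast; linarith
    have := lt_of_mul_lt_mul_right h₁ hb.le
    have := lt_of_mul_lt_mul_right h₂ hb.le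
    norm_cast at *
    omega
  obtain ⟨Mx, hMx⟩ := exists_nextPoint_eq ha (b := b) (c := c) x
  obtain ⟨My, hMy⟩ := exists_nextPoint_eq ha (b := b) (c := c) y
  exact ⟨Mx - My, by rw [hMx, hMy, hk]; push_cast; ring⟩

lemma nextPoint_sub_nextPoint_eq_or_nonempty {x y ε : ℝ} (hx : x ∈ solSet a b c r)
    (hx' : x ∈ Ico 0 a) (hy : y ∈ solSet a b c r) (hy' : y ∈ Ico 0 a) (hxy : |y - x| < b - a)
    (hxyε : |y - x| < ε)
    (hTx : 0 < nextPoint ha b c x) (hTy : 0 < nextPoint ha b c y) :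
    nextPoint ha b c y - nextPoint ha b c x = y - x ∨
      (Ioo 0 ε ∩ solSet a b c r).Nonempty ∧ (Ioo (-ε) 0 ∩ solSet a b c r).Nonempty := by
  obtain ⟨M, hM⟩ := exists_nextPoint_sub_nextPoint ha hab hc hx hx' hy hy' hxy
  rcases eq_or_ne M 0 with rfl | hM0
  · left
    simpa using hM
  right
  have hxya : |y - x| < a := abs_sub_lt_iff.2
    ⟨by linarith [hy'.2, hx'.1], by linarith [hx'.2, hy'.1]⟩
  have hTx' := nextPoint_mem_solSet ha hab hc hx hx'
  have hTy' := nextPoint_mem_solSet ha hab hc hy hy'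
  rcases lt_abs_and_sub_abs_lt_of_sub_eq ⟨hTx, (nextPoint_mem_Ico ha x).2⟩
      ⟨hTy, (nextPoint_mem_Ico ha y).2⟩ hxya hM0 hM with ⟨h₁, h₂⟩ | ⟨h₁, h₂⟩
  · exact nonempty_Ioo_inter_solSet_of_mem hTx' hTy' ⟨hTx, h₁.trans hxyε⟩ (by linarith)
      (nextPoint_mem_Ico ha y).2
  · exact nonempty_Ioo_inter_solSet_of_mem hTy' hTx' ⟨hTy, h₁.trans hxyε⟩ (by linarith)
      (nextPoint_mem_Ico ha x).2

end nextPoint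

section orbit

variable {a b c r t₀ : ℝ} (ha : 0 < a) (ht₀' : t₀ ∈ Ico 0 a)
include ht₀'

lemma iterate_nextPoint_mem_Ico (n : ℕ) : (nextPoint ha b c)^[n] t₀ ∈ Ico 0 a := by
  cases n with
  | zero => exact ht₀'
  | succ n => rw [Function.iterate_succ_apply']; exact nextPoint_mem_Ico ha _

lemma iterate_nextPoint_mem_solSet (hab : a < b) (hc : 0 ≤ c) (ht₀ : t₀ ∈ solSet a b c r)
    (n : ℕ) : (nextPoint ha b c)^[n] t₀ ∈ solSet a b c r := by
  induction n with
  | zero => exact ht₀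
  | succ n ih =>
    rw [Function.iterate_succ_apply']
    exact nextPoint_mem_solSet ha hab hc ih (iterate_nextPoint_mem_Ico ha ht₀' n)

lemma exists_iterate_nextPoint_sub (hb : 0 < b) (hac : a ≤ c) {m n : ℕ} (hmn : m < n) :
    ∃ B C : ℤ, 0 < B ∧
      (nextPoint ha b c)^[n] t₀ - (nextPoint ha b c)^[m] t₀ = B * b - C * a := by
  have hstep (i : ℕ) : ∃ B C : ℤ, 0 < B ∧
      (nextPoint ha b c)^[i + 1] t₀ - (nextPoint ha b c)^[i] t₀ = B * b - C * a := by
    rw [Function.iterate_succ_apply']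
    exact exists_nextPoint_sub ha hb ((iterate_nextPoint_mem_Ico ha ht₀' i).2.trans_le hac)
  induction n, hmn using Nat.le_induction with
  | base => exact hstep m
  | succ n hmn ih =>
    obtain ⟨B, C, hB, h⟩ := ih
    obtain ⟨B', C', hB', h'⟩ := hstep n
    exact ⟨B + B', C + C', by omega, by push_cast; linarith⟩

lemma iterate_nextPoint_injective (hb : 0 < b) (hac : a ≤ c) (hirr : Irrational (a / b)) :
    Function.Injective fun n => (nextPoint ha b c)^[n] t₀ := by
  refine Function.Injective.of_lt_imp_ne fun m n hmn heq => ?_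
  obtain ⟨B, C, hB, h⟩ := exists_iterate_nextPoint_sub ha ht₀' hb hac hmn
  have := hirr.eq_zero_of_int_mul_eq_int_mul hb.ne' (B := B) (C := C) (by linarith)
  omega

end orbit

theorem nonempty_Ioo_inter_solSet {a b c r : ℝ} (ha : 0 < a) (hab : a < b) (hac : a ≤ c)
    (hirr : Irrational (a / b)) (hne : (solSet a b c r).Nonempty) {ε : ℝ} (hε : 0 < ε) :
    (Ioo 0 ε ∩ solSet a b c r).Nonempty ∧ (Ioo (-ε) 0 ∩ solSet a b c r).Nonempty := by
  have hb : 0 < b := ha.trans hab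
  have hc : 0 ≤ c := ha.le.trans hac
  -- Starting from `0` when possible keeps every later point of the orbit away from `0`.
  obtain ⟨t₀, ht₀, ht₀', hzero⟩ : ∃ t₀ ∈ solSet a b c r, t₀ ∈ Ico 0 a ∧
      (0 ∈ solSet a b c r → t₀ = 0) := by
    by_cases h0 : (0 : ℝ) ∈ solSet a b c r
    · exact ⟨0, h0, ⟨le_rfl, ha⟩, fun _ => rfl⟩
    · obtain ⟨t, ht⟩ := hne
      exact ⟨_, toIcoMod_mem_solSet ha ht, by simpa using toIcoMod_mem_Ico ha 0 t,
        fun h => absurd h h0⟩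
  set u : ℕ → ℝ := fun n => (nextPoint ha b c)^[n] t₀
  have hsucc (n : ℕ) : u (n + 1) = nextPoint ha b c (u n) :=
    Function.iterate_succ_apply' _ _ _
  have hu (n : ℕ) : u n ∈ solSet a b c r :=
    iterate_nextPoint_mem_solSet ha ht₀' hab hc ht₀ n
  have hu' (n : ℕ) : u n ∈ Ico 0 a := iterate_nextPoint_mem_Ico ha ht₀' n
  have hinj : Function.Injective u := iterate_nextPoint_injective ha ht₀' hb hac hirr
  have hpos (n : ℕ) : 0 < nextPoint ha b c (u n) := by
    rw [← hsucc]
    refine (hu' _).1.lt_of_ne fun h => n.succ_ne_zero (hinj ?_)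
    rw [← h]
    exact (hzero (h ▸ hu _)).symm
  obtain ⟨m, n, hmn, hclose⟩ := isCompact_Icc.exists_lt_dist_lt
    (fun n => Ico_subset_Icc_self (hu' n)) (lt_min hε (sub_pos.2 hab))
  rw [Real.dist_eq, lt_min_iff] at hclose
  by_contra hfalse
  refine sub_ne_zero.2 (hinj.ne hmn.ne') <| eq_zero_of_forall_add_eq_add hmn
    (fun i => Ico_subset_Icc_self (hu' i)) fun i => ?_
  induction i with
  | zero => simp
  | succ i ih =>
    have hdi : u (n + i) - u (m + i) = u n - u m := by rw [ih]; ring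
    rcases nextPoint_sub_nextPoint_eq_or_nonempty ha hab hc (hu (m + i)) (hu' _) (hu (n + i))
      (hu' _) (hdi ▸ hclose.2) (hdi ▸ hclose.1) (hpos _) (hpos _) with h | h
    · rw [← add_assoc, ← add_assoc, hsucc, hsucc]
      linarith
    · exact absurd h hfalse

theorem S_and_D_dense_at_origin_general (a b c : ℝ)
    (ha : 0 < a) (hab : a < b) (hbc : b < c)
    (hirr : Irrational (a / b)) :
    (Sset a b c ≠ ∅ → ∀ ε : ℝ, 0 < ε →
      Set.Ioo (0 : ℝ) ε ∩ Sset a b c ≠ ∅ ∧ Set.Ioo (-ε) (0 : ℝ) ∩ Sset a b c ≠ ∅) ∧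
    (Dset a b c ≠ ∅ → ∀ ε : ℝ, 0 < ε →
      Set.Ioo (0 : ℝ) ε ∩ Dset a b c ≠ ∅ ∧ Set.Ioo (-ε) (0 : ℝ) ∩ Dset a b c ≠ ∅) := by
  have key (r : ℝ) (hr : solSet a b c r ≠ ∅) (ε : ℝ) (hε : 0 < ε) :
      Ioo 0 ε ∩ solSet a b c r ≠ ∅ ∧ Ioo (-ε) 0 ∩ solSet a b c r ≠ ∅ :=
    (nonempty_Ioo_inter_solSet ha hab (hab.trans hbc).le hirr (nonempty_iff_ne_empty.2 hr) hε).imp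
      Nonempty.ne_empty Nonempty.ne_empty
  exact ⟨key 1, key 2⟩

/-- Lemma `rabcbasic2`: with `c₀ = c − ⌊c/b⌋·b`, `b − a < c₀ < a` and `a/b ∉ ℚ`:
(i) if `S_{a,b,c} ≠ ∅` then `(0,ε) ∩ S_{a,b,c} ≠ ∅` and `(−ε,0) ∩ S_{a,b,c} ≠ ∅` for all `ε > 0`;
(ii) the same with `S` replaced by `D`. -/
theorem S_and_D_dense_at_origin (a b c c₀ : ℝ)
    (ha : 0 < a) (hab : a < b) (hbc : b < c)
    (hc0 : c₀ = c - (⌊c / b⌋ : ℝ) * b) (h1 : b - a < c₀) (h2 : c₀ < a)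
    (hirr : Irrational (a / b)) :
    (Sset a b c ≠ ∅ → ∀ ε : ℝ, 0 < ε →
      Set.Ioo (0 : ℝ) ε ∩ Sset a b c ≠ ∅ ∧ Set.Ioo (-ε) (0 : ℝ) ∩ Sset a b c ≠ ∅) ∧
    (Dset a b c ≠ ∅ → ∀ ε : ℝ, 0 < ε →
      Set.Ioo (0 : ℝ) ε ∩ Dset a b c ≠ ∅ ∧ Set.Ioo (-ε) (0 : ℝ) ∩ Dset a b c ≠ ∅) :=
  S_and_D_dense_at_origin_general a b c ha hab hbc hirr
end
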